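/- Let Γ and Δ be multisets of D-formulas and G-formulas respectively, and let Γ → Δ have a C-proof Ξ in which an ⊃-R rule with upper sequent B,Σ → Π,D and lower sequent Σ → Π,B⊃D occurs with the following characteristic: B,Σ → D does not have an I-proof but for some F ∈ Π, B,Σ → F has an I-proof. Then B,Σ → Δ has a C-proof whose nonconstructiveness measure is smaller than μ(Ξ). -/
import Mathlib


set_option maxHeartbeats 1000000

/-- Terms of a first-order language: variables (de Bruijn indices for
quantified variables) and constants. -/
inductive Tm : Type
  | var : ℕ → Tm
  | const : ℕ → Tm

namespace Tm

/-- Substitution of the term `u` for the variable with index `k`. -/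
def subst (k : ℕ) (u : Tm) : Tm → Tm
  | var n => if n = k then u else var n
  | const c => const c

/-- The constant `c` occurs in a term. -/
def constIn (c : ℕ) : Tm → Prop
  | var _ => False
  | const d => d = c

end Tm

/-- First-order formulas over the primitives ⊤, ⊥, ∧, ∨, ⊃, ∃, ∀.
Quantifiers are represented with de Bruijn indices. -/
inductive Fm : Type
  | top : Fm
  | bot : Fm
  | atom : ℕ → List Tm → Fm
  | conj : Fm → Fm → Fm
  | disj : Fm → Fm → Fm
  | imp : Fm → Fm → Fm
  | ex : Fm → Fm
  | all : Fm → Fm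

namespace Fm

/-- Substitution of a term for the variable with de Bruijn index `k`. -/
def subst (k : ℕ) (u : Tm) : Fm → Fm
  | top => top
  | bot => bot
  | atom p ts => atom p (ts.map (Tm.subst k u))
  | conj a b => conj (subst k u a) (subst k u b)
  | disj a b => disj (subst k u a) (subst k u b)
  | imp a b => imp (subst k u a) (subst k u b)
  | ex a => ex (subst (k + 1) u a)
  | all a => all (subst (k + 1) u a)

/-- `[t/x]B`: instantiation of the outermost bound variable of the body of a
quantified formula with the term `u`. -/
def inst (u : Tm) (a : Fm) : Fm := subst 0 u a

/-- Atomic formulas (⊤ and ⊥ are *not* atomic). -/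
def isAtom : Fm → Prop
  | atom _ _ => True
  | _ => False

/-- Formulas that need no right-introduction rule in a uniform/O_G proof:
atomic formulas and ⊥. -/
def neutral (F : Fm) : Prop := F.isAtom ∨ F = bot

/-- The constant `c` occurs in a formula. -/
def constIn (c : ℕ) : Fm → Prop
  | top => False
  | bot => False
  | atom _ ts => ∃ t ∈ ts, t.constIn c
  | conj a b => constIn c a ∨ constIn c b
  | disj a b => constIn c a ∨ constIn c b
  | imp a b => constIn c a ∨ constIn c b
  | ex a => constIn c a
  | all a => constIn c a

end Fm

/-- The eigenvariable (constant) `c` does not occur in the sequent `Γ → Δ`. -/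
def FreshSeq (c : ℕ) (Γ Δ : Multiset Fm) : Prop :=
  (∀ F ∈ Γ, ¬ F.constIn c) ∧ ∀ F ∈ Δ, ¬ F.constIn c

/-- The sequent `Γ → Δ` is an axiom: ⊤ ∈ Δ, or some `A` that is ⊥ or atomic
belongs to both `Γ` and `Δ`. -/
def AxSeq (Γ Δ : Multiset Fm) : Prop :=
  Fm.top ∈ Δ ∨ ∃ A : Fm, (A = Fm.bot ∨ A.isAtom) ∧ A ∈ Γ ∧ A ∈ Δ

/-- C-proofs: arbitrary derivations in the sequent calculus of the paper.
Sequents are pairs of multisets of formulas. -/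
inductive CProof : Multiset Fm → Multiset Fm → Type
  | ax {Γ Δ : Multiset Fm} (h : AxSeq Γ Δ) : CProof Γ Δ
  | contrL {B : Fm} {Γ Δ : Multiset Fm} (p : CProof (B ::ₘ B ::ₘ Γ) Δ) : CProof (B ::ₘ Γ) Δ
  | contrR {B : Fm} {Γ Δ : Multiset Fm} (p : CProof Γ (B ::ₘ B ::ₘ Δ)) : CProof Γ (B ::ₘ Δ)
  | botR {D : Fm} {Γ Δ : Multiset Fm} (p : CProof Γ (Fm.bot ::ₘ Δ)) : CProof Γ (D ::ₘ Δ)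
  | andL {B D : Fm} {Γ Δ : Multiset Fm} (p : CProof (B ::ₘ D ::ₘ (B.conj D) ::ₘ Γ) Δ) :
      CProof ((B.conj D) ::ₘ Γ) Δ
  | andR {B D : Fm} {Γ Δ : Multiset Fm} (p : CProof Γ (B ::ₘ Δ)) (q : CProof Γ (D ::ₘ Δ)) :
      CProof Γ ((B.conj D) ::ₘ Δ)
  | orL {B D : Fm} {Γ Δ : Multiset Fm} (p : CProof (B ::ₘ Γ) Δ) (q : CProof (D ::ₘ Γ) Δ) :
      CProof ((B.disj D) ::ₘ Γ) Δ
  | orR1 {B D : Fm} {Γ Δ : Multiset Fm} (p : CProof Γ (B ::ₘ Δ)) : CProof Γ ((B.disj D) ::ₘ Δ)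
  | orR2 {B D : Fm} {Γ Δ : Multiset Fm} (p : CProof Γ (D ::ₘ Δ)) : CProof Γ ((B.disj D) ::ₘ Δ)
  | impL {B D : Fm} {Γ Δ Θ : Multiset Fm} (p : CProof ((B.imp D) ::ₘ Γ) (B ::ₘ Δ))
      (q : CProof (D ::ₘ Γ) Θ) : CProof ((B.imp D) ::ₘ Γ) (Δ + Θ)
  | impR {B D : Fm} {Γ Δ : Multiset Fm} (p : CProof (B ::ₘ Γ) (D ::ₘ Δ)) :
      CProof Γ ((B.imp D) ::ₘ Δ)
  | allL {B : Fm} {Γ Δ : Multiset Fm} (t : Tm)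
      (p : CProof ((B.inst t) ::ₘ (Fm.all B) ::ₘ Γ) Δ) : CProof ((Fm.all B) ::ₘ Γ) Δ
  | exR {B : Fm} {Γ Δ : Multiset Fm} (t : Tm) (p : CProof Γ ((B.inst t) ::ₘ Δ)) :
      CProof Γ ((Fm.ex B) ::ₘ Δ)
  | exL {B : Fm} {Γ Δ : Multiset Fm} (c : ℕ) (hc : FreshSeq c ((Fm.ex B) ::ₘ Γ) Δ)
      (p : CProof ((B.inst (Tm.const c)) ::ₘ Γ) Δ) : CProof ((Fm.ex B) ::ₘ Γ) Δ
  | allR {B : Fm} {Γ Δ : Multiset Fm} (c : ℕ) (hc : FreshSeq c Γ ((Fm.all B) ::ₘ Δ))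
      (p : CProof Γ ((B.inst (Tm.const c)) ::ₘ Δ)) : CProof Γ ((Fm.all B) ::ₘ Δ)

namespace CProof

/-- An I-proof is a C-proof in which every sequent has exactly one formula in
its succedent. -/
def isI : ∀ (Γ Δ : Multiset Fm), CProof Γ Δ → Prop
  | _, _, @ax _ Δ _ => Multiset.card Δ = 1
  | _, _, @contrL _ _ Δ p => Multiset.card Δ = 1 ∧ isI _ _ p
  | _, _, @contrR B _ Δ p => Multiset.card (B ::ₘ Δ) = 1 ∧ isI _ _ p
  | _, _, @botR D _ Δ p => Multiset.card (D ::ₘ Δ) = 1 ∧ isI _ _ p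
  | _, _, @andL _ _ _ Δ p => Multiset.card Δ = 1 ∧ isI _ _ p
  | _, _, @andR B D _ Δ p q => Multiset.card ((B.conj D) ::ₘ Δ) = 1 ∧ isI _ _ p ∧ isI _ _ q
  | _, _, @orL _ _ _ Δ p q => Multiset.card Δ = 1 ∧ isI _ _ p ∧ isI _ _ q
  | _, _, @orR1 B D _ Δ p => Multiset.card ((B.disj D) ::ₘ Δ) = 1 ∧ isI _ _ p
  | _, _, @orR2 B D _ Δ p => Multiset.card ((B.disj D) ::ₘ Δ) = 1 ∧ isI _ _ p
  | _, _, @impL _ _ _ Δ Θ p q => Multiset.card (Δ + Θ) = 1 ∧ isI _ _ p ∧ isI _ _ q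
  | _, _, @impR B D _ Δ p => Multiset.card ((B.imp D) ::ₘ Δ) = 1 ∧ isI _ _ p
  | _, _, @allL _ _ Δ _ p => Multiset.card Δ = 1 ∧ isI _ _ p
  | _, _, @exR B _ Δ _ p => Multiset.card ((Fm.ex B) ::ₘ Δ) = 1 ∧ isI _ _ p
  | _, _, @exL _ _ Δ _ _ p => Multiset.card Δ = 1 ∧ isI _ _ p
  | _, _, @allR B _ Δ _ _ p => Multiset.card ((Fm.all B) ::ₘ Δ) = 1 ∧ isI _ _ p

end CProof

/-- Classical provability: `Γ ⊢_C F`. -/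
def CProv (Γ : Multiset Fm) (F : Fm) : Prop := Nonempty (CProof Γ ({F} : Multiset Fm))

/-- Intuitionistic provability: `Γ ⊢_I F`. -/
def IProv (Γ : Multiset Fm) (F : Fm) : Prop := ∃ p : CProof Γ ({F} : Multiset Fm), p.isI

namespace CProof

open Classical in
/-- The nonconstructiveness measure of a C-proof: the number of
nonconstructive occurrences of ∨-L and ⊃-R rules in it. -/
noncomputable def mu : ∀ (Γ Δ : Multiset Fm), CProof Γ Δ → ℕ
  | _, _, ax _ => 0
  | _, _, contrL p => mu _ _ p
  | _, _, contrR p => mu _ _ p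
  | _, _, botR p => mu _ _ p
  | _, _, andL p => mu _ _ p
  | _, _, andR p q => mu _ _ p + mu _ _ q
  | _, _, @orL B D Γ Δ p q =>
      mu _ _ p + mu _ _ q +
        (if ∃ F ∈ Δ, IProv (B ::ₘ Γ) F ∧ IProv (D ::ₘ Γ) F then 0 else 1)
  | _, _, orR1 p => mu _ _ p
  | _, _, orR2 p => mu _ _ p
  | _, _, impL p q => mu _ _ p + mu _ _ q
  | _, _, @impR B D Γ _ p => mu _ _ p + (if IProv (B ::ₘ Γ) D then 0 else 1)
  | _, _, allL _ p => mu _ _ p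
  | _, _, exR _ p => mu _ _ p
  | _, _, exL _ _ p => mu _ _ p
  | _, _, allR _ _ p => mu _ _ p

/-- The sequent `S → P` appears in the given C-proof. -/
def occursSeq : ∀ (Γ Δ : Multiset Fm), CProof Γ Δ → Multiset Fm → Multiset Fm → Prop
  | _, _, @ax Γ Δ _, S, P => Γ = S ∧ Δ = P
  | _, _, @contrL B Γ Δ p, S, P => ((B ::ₘ Γ) = S ∧ Δ = P) ∨ occursSeq _ _ p S P
  | _, _, @contrR B Γ Δ p, S, P => (Γ = S ∧ (B ::ₘ Δ) = P) ∨ occursSeq _ _ p S P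
  | _, _, @botR D Γ Δ p, S, P => (Γ = S ∧ (D ::ₘ Δ) = P) ∨ occursSeq _ _ p S P
  | _, _, @andL B D Γ Δ p, S, P => (((B.conj D) ::ₘ Γ) = S ∧ Δ = P) ∨ occursSeq _ _ p S P
  | _, _, @andR B D Γ Δ p q, S, P =>
      (Γ = S ∧ ((B.conj D) ::ₘ Δ) = P) ∨ occursSeq _ _ p S P ∨ occursSeq _ _ q S P
  | _, _, @orL B D Γ Δ p q, S, P =>
      (((B.disj D) ::ₘ Γ) = S ∧ Δ = P) ∨ occursSeq _ _ p S P ∨ occursSeq _ _ q S P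
  | _, _, @orR1 B D Γ Δ p, S, P => (Γ = S ∧ ((B.disj D) ::ₘ Δ) = P) ∨ occursSeq _ _ p S P
  | _, _, @orR2 B D Γ Δ p, S, P => (Γ = S ∧ ((B.disj D) ::ₘ Δ) = P) ∨ occursSeq _ _ p S P
  | _, _, @impL B D Γ Δ Θ p q, S, P =>
      (((B.imp D) ::ₘ Γ) = S ∧ (Δ + Θ) = P) ∨ occursSeq _ _ p S P ∨ occursSeq _ _ q S P
  | _, _, @impR B D Γ Δ p, S, P => (Γ = S ∧ ((B.imp D) ::ₘ Δ) = P) ∨ occursSeq _ _ p S P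
  | _, _, @allL B Γ Δ _ p, S, P => (((Fm.all B) ::ₘ Γ) = S ∧ Δ = P) ∨ occursSeq _ _ p S P
  | _, _, @exR B Γ Δ _ p, S, P => (Γ = S ∧ ((Fm.ex B) ::ₘ Δ) = P) ∨ occursSeq _ _ p S P
  | _, _, @exL B Γ Δ _ _ p, S, P => (((Fm.ex B) ::ₘ Γ) = S ∧ Δ = P) ∨ occursSeq _ _ p S P
  | _, _, @allR B Γ Δ _ _ p, S, P => (Γ = S ∧ ((Fm.all B) ::ₘ Δ) = P) ∨ occursSeq _ _ p S P

/-- `hasImpR p B S P D` holds when an ⊃-R rule with upper sequent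
`B,S → P,D` and lower sequent `S → P,B⊃D` occurs in the proof `p`. -/
def hasImpR : ∀ (Γ Δ : Multiset Fm), CProof Γ Δ → Fm → Multiset Fm → Multiset Fm → Fm → Prop
  | _, _, ax _, _, _, _, _ => False
  | _, _, contrL p, B, S, P, D => hasImpR _ _ p B S P D
  | _, _, contrR p, B, S, P, D => hasImpR _ _ p B S P D
  | _, _, botR p, B, S, P, D => hasImpR _ _ p B S P D
  | _, _, andL p, B, S, P, D => hasImpR _ _ p B S P D
  | _, _, andR p q, B, S, P, D => hasImpR _ _ p B S P D ∨ hasImpR _ _ q B S P D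
  | _, _, orL p q, B, S, P, D => hasImpR _ _ p B S P D ∨ hasImpR _ _ q B S P D
  | _, _, orR1 p, B, S, P, D => hasImpR _ _ p B S P D
  | _, _, orR2 p, B, S, P, D => hasImpR _ _ p B S P D
  | _, _, impL p q, B, S, P, D => hasImpR _ _ p B S P D ∨ hasImpR _ _ q B S P D
  | _, _, @impR B' D' Γ' Δ' p, B, S, P, D =>
      (B' = B ∧ Γ' = S ∧ Δ' = P ∧ D' = D) ∨ hasImpR _ _ p B S P D
  | _, _, allL _ p, B, S, P, D => hasImpR _ _ p B S P D
  | _, _, exR _ p, B, S, P, D => hasImpR _ _ p B S P D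
  | _, _, exL _ _ p, B, S, P, D => hasImpR _ _ p B S P D
  | _, _, allR _ _ p, B, S, P, D => hasImpR _ _ p B S P D

/-- `hasOrL p B D S P` holds when an ∨-L rule with upper sequents
`B,S → P` and `D,S → P` and lower sequent `B∨D,S → P` occurs in `p`. -/
def hasOrL : ∀ (Γ Δ : Multiset Fm), CProof Γ Δ → Fm → Fm → Multiset Fm → Multiset Fm → Prop
  | _, _, ax _, _, _, _, _ => False
  | _, _, contrL p, B, D, S, P => hasOrL _ _ p B D S P
  | _, _, contrR p, B, D, S, P => hasOrL _ _ p B D S P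
  | _, _, botR p, B, D, S, P => hasOrL _ _ p B D S P
  | _, _, andL p, B, D, S, P => hasOrL _ _ p B D S P
  | _, _, andR p q, B, D, S, P => hasOrL _ _ p B D S P ∨ hasOrL _ _ q B D S P
  | _, _, @orL B' D' Γ' Δ' p q, B, D, S, P =>
      (B' = B ∧ D' = D ∧ Γ' = S ∧ Δ' = P) ∨ hasOrL _ _ p B D S P ∨ hasOrL _ _ q B D S P
  | _, _, orR1 p, B, D, S, P => hasOrL _ _ p B D S P
  | _, _, orR2 p, B, D, S, P => hasOrL _ _ p B D S P
  | _, _, impL p q, B, D, S, P => hasOrL _ _ p B D S P ∨ hasOrL _ _ q B D S P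
  | _, _, impR p, B, D, S, P => hasOrL _ _ p B D S P
  | _, _, allL _ p, B, D, S, P => hasOrL _ _ p B D S P
  | _, _, exR _ p, B, D, S, P => hasOrL _ _ p B D S P
  | _, _, exL _ _ p, B, D, S, P => hasOrL _ _ p B D S P
  | _, _, allR _ _ p, B, D, S, P => hasOrL _ _ p B D S P

/-- Every formula in `Δ` is atomic or ⊥. -/
def neutralM (Δ : Multiset Fm) : Prop := ∀ F ∈ Δ, F.neutral

/-- A uniform proof: an I-proof in which any sequent whose succedent contains
a non-atomic formula occurs only as the lower sequent of an inference rule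
that introduces the top-level logical symbol of that formula. -/
def isUniform : ∀ (Γ Δ : Multiset Fm), CProof Γ Δ → Prop
  | _, _, @ax _ Δ _ => Multiset.card Δ = 1
  | _, _, @contrL _ _ Δ p => Multiset.card Δ = 1 ∧ neutralM Δ ∧ isUniform _ _ p
  | _, _, @contrR B _ Δ p =>
      Multiset.card (B ::ₘ Δ) = 1 ∧ neutralM (B ::ₘ Δ) ∧ isUniform _ _ p
  | _, _, @botR D _ Δ p =>
      Multiset.card (D ::ₘ Δ) = 1 ∧ neutralM (D ::ₘ Δ) ∧ isUniform _ _ p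
  | _, _, @andL _ _ _ Δ p => Multiset.card Δ = 1 ∧ neutralM Δ ∧ isUniform _ _ p
  | _, _, @andR B D _ Δ p q =>
      Multiset.card ((B.conj D) ::ₘ Δ) = 1 ∧ isUniform _ _ p ∧ isUniform _ _ q
  | _, _, @orL _ _ _ Δ p q =>
      Multiset.card Δ = 1 ∧ neutralM Δ ∧ isUniform _ _ p ∧ isUniform _ _ q
  | _, _, @orR1 B D _ Δ p => Multiset.card ((B.disj D) ::ₘ Δ) = 1 ∧ isUniform _ _ p
  | _, _, @orR2 B D _ Δ p => Multiset.card ((B.disj D) ::ₘ Δ) = 1 ∧ isUniform _ _ p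
  | _, _, @impL _ _ _ Δ Θ p q =>
      Multiset.card (Δ + Θ) = 1 ∧ neutralM (Δ + Θ) ∧ isUniform _ _ p ∧ isUniform _ _ q
  | _, _, @impR B D _ Δ p => Multiset.card ((B.imp D) ::ₘ Δ) = 1 ∧ isUniform _ _ p
  | _, _, @allL _ _ Δ _ p => Multiset.card Δ = 1 ∧ neutralM Δ ∧ isUniform _ _ p
  | _, _, @exR B _ Δ _ p => Multiset.card ((Fm.ex B) ::ₘ Δ) = 1 ∧ isUniform _ _ p
  | _, _, @exL _ _ Δ _ _ p => Multiset.card Δ = 1 ∧ neutralM Δ ∧ isUniform _ _ p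
  | _, _, @allR B _ Δ _ _ p => Multiset.card ((Fm.all B) ::ₘ Δ) = 1 ∧ isUniform _ _ p

end CProof

/-- Uniform provability: `Γ ⊢_O F`. -/
def UProv (Γ : Multiset Fm) (F : Fm) : Prop :=
  ∃ p : CProof Γ ({F} : Multiset Fm), p.isUniform

/-- The ordering ⪰ measuring the strength of formulas as assumptions. -/
inductive Fm.ge : Fm → Fm → Prop
  | refl (F : Fm) : Fm.ge F F
  | imp {F A B : Fm} : Fm.ge F B → Fm.ge F (Fm.imp A B)
  | disjl {F A B : Fm} : Fm.ge F A → Fm.ge F (Fm.disj A B)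
  | disjr {F A B : Fm} : Fm.ge F B → Fm.ge F (Fm.disj A B)
  | ex {F P : Fm} (c : ℕ) : Fm.ge F (P.inst (Tm.const c)) → Fm.ge F (Fm.ex P)

/-- `MsGe Γ₁ Γ₂`: there is an injective map κ from `Γ₂` into `Γ₁` with
`κ(F) ⪰ F` for every `F ∈ Γ₂`. -/
def MsGe (Γ₁ Γ₂ : Multiset Fm) : Prop :=
  ∃ Γ' ≤ Γ₁, Multiset.Rel Fm.ge Γ' Γ₂

mutual
  /-- G-formulas: G ::= ⊤ | ⊥ | A | G∧G | G∨G | D⊃G | ∃x G. -/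
  inductive GFm : Fm → Prop
    | top : GFm Fm.top
    | bot : GFm Fm.bot
    | atom {p : ℕ} {ts : List Tm} : GFm (Fm.atom p ts)
    | conj {a b : Fm} : GFm a → GFm b → GFm (Fm.conj a b)
    | disj {a b : Fm} : GFm a → GFm b → GFm (Fm.disj a b)
    | imp {a b : Fm} : DFm a → GFm b → GFm (Fm.imp a b)
    | ex {a : Fm} : GFm a → GFm (Fm.ex a)

  /-- D-formulas: D ::= ⊤ | ⊥ | A | G⊃D | D∧D | D∨D | ∃x D | ∀x D. -/
  inductive DFm : Fm → Prop
    | top : DFm Fm.top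
    | bot : DFm Fm.bot
    | atom {p : ℕ} {ts : List Tm} : DFm (Fm.atom p ts)
    | imp {a b : Fm} : GFm a → DFm b → DFm (Fm.imp a b)
    | conj {a b : Fm} : DFm a → DFm b → DFm (Fm.conj a b)
    | disj {a b : Fm} : DFm a → DFm b → DFm (Fm.disj a b)
    | ex {a : Fm} : DFm a → DFm (Fm.ex a)
    | all {a : Fm} : DFm a → DFm (Fm.all a)
end
/-- I_G-proofs: derivations in the intuitionistic sequent calculus (single
succedent formula) augmented with the derived rules ∨-L_G and res_G, in which
the eigenvariable proviso on ∃-L and ∀-R also disallows constants in `G`. -/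
inductive IGProof (G : Fm) : Multiset Fm → Fm → Type
  | ax {Γ : Multiset Fm} {F : Fm} (h : AxSeq Γ ({F} : Multiset Fm)) : IGProof G Γ F
  | contrL {B : Fm} {Γ : Multiset Fm} {F : Fm} (p : IGProof G (B ::ₘ B ::ₘ Γ) F) :
      IGProof G (B ::ₘ Γ) F
  | botR {Γ : Multiset Fm} {F : Fm} (p : IGProof G Γ Fm.bot) : IGProof G Γ F
  | andL {B D : Fm} {Γ : Multiset Fm} {F : Fm}
      (p : IGProof G (B ::ₘ D ::ₘ (B.conj D) ::ₘ Γ) F) : IGProof G ((B.conj D) ::ₘ Γ) F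
  | andR {B D : Fm} {Γ : Multiset Fm} (p : IGProof G Γ B) (q : IGProof G Γ D) :
      IGProof G Γ (B.conj D)
  | orL {B D : Fm} {Γ : Multiset Fm} {F : Fm} (p : IGProof G (B ::ₘ Γ) F)
      (q : IGProof G (D ::ₘ Γ) F) : IGProof G ((B.disj D) ::ₘ Γ) F
  | orR1 {B D : Fm} {Γ : Multiset Fm} (p : IGProof G Γ B) : IGProof G Γ (B.disj D)
  | orR2 {B D : Fm} {Γ : Multiset Fm} (p : IGProof G Γ D) : IGProof G Γ (B.disj D)
  | impL {B D : Fm} {Γ : Multiset Fm} {F : Fm} (p : IGProof G ((B.imp D) ::ₘ Γ) B)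
      (q : IGProof G (D ::ₘ Γ) F) : IGProof G ((B.imp D) ::ₘ Γ) F
  | impR {B D : Fm} {Γ : Multiset Fm} (p : IGProof G (B ::ₘ Γ) D) : IGProof G Γ (B.imp D)
  | allL {B : Fm} {Γ : Multiset Fm} {F : Fm} (t : Tm)
      (p : IGProof G ((B.inst t) ::ₘ (Fm.all B) ::ₘ Γ) F) : IGProof G ((Fm.all B) ::ₘ Γ) F
  | exR {B : Fm} {Γ : Multiset Fm} (t : Tm) (p : IGProof G Γ (B.inst t)) :
      IGProof G Γ (Fm.ex B)
  | exL {B : Fm} {Γ : Multiset Fm} {F : Fm} (c : ℕ)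
      (hc : FreshSeq c ((Fm.ex B) ::ₘ Γ) ({F} : Multiset Fm)) (hG : ¬ G.constIn c)
      (p : IGProof G ((B.inst (Tm.const c)) ::ₘ Γ) F) : IGProof G ((Fm.ex B) ::ₘ Γ) F
  | allR {B : Fm} {Γ : Multiset Fm} (c : ℕ)
      (hc : FreshSeq c Γ ({Fm.all B} : Multiset Fm)) (hG : ¬ G.constIn c)
      (p : IGProof G Γ (B.inst (Tm.const c))) : IGProof G Γ (Fm.all B)
  | orLG {B D : Fm} {Γ : Multiset Fm} {F : Fm} (p : IGProof G (B ::ₘ Γ) F)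
      (q : IGProof G (D ::ₘ Γ) G) : IGProof G ((B.disj D) ::ₘ Γ) F
  | resG {Γ : Multiset Fm} {F : Fm} (p : IGProof G Γ G) : IGProof G Γ F

namespace IGProof

/-- The number of occurrences of the ∨-L rule in an I_G-proof. -/
def orLCount : ∀ (G : Fm) (Γ : Multiset Fm) (F : Fm), IGProof G Γ F → ℕ
  | _, _, _, ax _ => 0
  | _, _, _, contrL p => orLCount _ _ _ p
  | _, _, _, botR p => orLCount _ _ _ p
  | _, _, _, andL p => orLCount _ _ _ p
  | _, _, _, andR p q => orLCount _ _ _ p + orLCount _ _ _ q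
  | _, _, _, orL p q => orLCount _ _ _ p + orLCount _ _ _ q + 1
  | _, _, _, orR1 p => orLCount _ _ _ p
  | _, _, _, orR2 p => orLCount _ _ _ p
  | _, _, _, impL p q => orLCount _ _ _ p + orLCount _ _ _ q
  | _, _, _, impR p => orLCount _ _ _ p
  | _, _, _, allL _ p => orLCount _ _ _ p
  | _, _, _, exR _ p => orLCount _ _ _ p
  | _, _, _, exL _ _ _ p => orLCount _ _ _ p
  | _, _, _, allR _ _ _ p => orLCount _ _ _ p
  | _, _, _, orLG p q => orLCount _ _ _ p + orLCount _ _ _ q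
  | _, _, _, resG p => orLCount _ _ _ p

/-- The height of an I_G-proof: the length of its longest branch. -/
def height : ∀ (G : Fm) (Γ : Multiset Fm) (F : Fm), IGProof G Γ F → ℕ
  | _, _, _, ax _ => 1
  | _, _, _, contrL p => height _ _ _ p + 1
  | _, _, _, botR p => height _ _ _ p + 1
  | _, _, _, andL p => height _ _ _ p + 1
  | _, _, _, andR p q => max (height _ _ _ p) (height _ _ _ q) + 1
  | _, _, _, orL p q => max (height _ _ _ p) (height _ _ _ q) + 1
  | _, _, _, orR1 p => height _ _ _ p + 1
  | _, _, _, orR2 p => height _ _ _ p + 1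
  | _, _, _, impL p q => max (height _ _ _ p) (height _ _ _ q) + 1
  | _, _, _, impR p => height _ _ _ p + 1
  | _, _, _, allL _ p => height _ _ _ p + 1
  | _, _, _, exR _ p => height _ _ _ p + 1
  | _, _, _, exL _ _ _ p => height _ _ _ p + 1
  | _, _, _, allR _ _ _ p => height _ _ _ p + 1
  | _, _, _, orLG p q => max (height _ _ _ p) (height _ _ _ q) + 1
  | _, _, _, resG p => height _ _ _ p + 1

/-- The number of sequents appearing in an I_G-proof. -/
def size : ∀ (G : Fm) (Γ : Multiset Fm) (F : Fm), IGProof G Γ F → ℕ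
  | _, _, _, ax _ => 1
  | _, _, _, contrL p => size _ _ _ p + 1
  | _, _, _, botR p => size _ _ _ p + 1
  | _, _, _, andL p => size _ _ _ p + 1
  | _, _, _, andR p q => size _ _ _ p + size _ _ _ q + 1
  | _, _, _, orL p q => size _ _ _ p + size _ _ _ q + 1
  | _, _, _, orR1 p => size _ _ _ p + 1
  | _, _, _, orR2 p => size _ _ _ p + 1
  | _, _, _, impL p q => size _ _ _ p + size _ _ _ q + 1
  | _, _, _, impR p => size _ _ _ p + 1
  | _, _, _, allL _ p => size _ _ _ p + 1
  | _, _, _, exR _ p => size _ _ _ p + 1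
  | _, _, _, exL _ _ _ p => size _ _ _ p + 1
  | _, _, _, allR _ _ _ p => size _ _ _ p + 1
  | _, _, _, orLG p q => size _ _ _ p + size _ _ _ q + 1
  | _, _, _, resG p => size _ _ _ p + 1

/-- O_G-proofs: I_G-proofs containing no occurrence of the ∨-L rule, in which
any sequent whose succedent contains a non-atomic formula occurs only as the
lower sequent of a rule introducing the top-level symbol of that formula. -/
def isOG : ∀ (G : Fm) (Γ : Multiset Fm) (F : Fm), IGProof G Γ F → Prop
  | _, _, _, ax _ => True
  | _, _, _, @contrL _ _ _ F p => F.neutral ∧ isOG _ _ _ p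
  | _, _, _, @botR _ _ F p => F.neutral ∧ isOG _ _ _ p
  | _, _, _, @andL _ _ _ _ F p => F.neutral ∧ isOG _ _ _ p
  | _, _, _, andR p q => isOG _ _ _ p ∧ isOG _ _ _ q
  | _, _, _, orL _ _ => False
  | _, _, _, orR1 p => isOG _ _ _ p
  | _, _, _, orR2 p => isOG _ _ _ p
  | _, _, _, @impL _ _ _ _ F p q => F.neutral ∧ isOG _ _ _ p ∧ isOG _ _ _ q
  | _, _, _, impR p => isOG _ _ _ p
  | _, _, _, @allL _ _ _ F _ p => F.neutral ∧ isOG _ _ _ p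
  | _, _, _, exR _ p => isOG _ _ _ p
  | _, _, _, @exL _ _ _ F _ _ _ p => F.neutral ∧ isOG _ _ _ p
  | _, _, _, allR _ _ _ p => isOG _ _ _ p
  | _, _, _, @orLG _ _ _ _ F p q => F.neutral ∧ isOG _ _ _ p ∧ isOG _ _ _ q
  | _, _, _, @resG _ _ F p => F.neutral ∧ isOG _ _ _ p

/-- `hasOrL p B D S F` holds when an ∨-L rule with upper sequents `B,S → F`
and `D,S → F` and lower sequent `B∨D,S → F` occurs in the I_G-proof `p`. -/
def hasOrL : ∀ (G : Fm) (Γ : Multiset Fm) (W : Fm), IGProof G Γ W →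
    Fm → Fm → Multiset Fm → Fm → Prop
  | _, _, _, ax _, _, _, _, _ => False
  | _, _, _, contrL p, B, D, S, F => hasOrL _ _ _ p B D S F
  | _, _, _, botR p, B, D, S, F => hasOrL _ _ _ p B D S F
  | _, _, _, andL p, B, D, S, F => hasOrL _ _ _ p B D S F
  | _, _, _, andR p q, B, D, S, F => hasOrL _ _ _ p B D S F ∨ hasOrL _ _ _ q B D S F
  | _, _, _, @orL _ B' D' Γ' F' p q, B, D, S, F =>
      (B' = B ∧ D' = D ∧ Γ' = S ∧ F' = F) ∨ hasOrL _ _ _ p B D S F ∨ hasOrL _ _ _ q B D S F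
  | _, _, _, orR1 p, B, D, S, F => hasOrL _ _ _ p B D S F
  | _, _, _, orR2 p, B, D, S, F => hasOrL _ _ _ p B D S F
  | _, _, _, impL p q, B, D, S, F => hasOrL _ _ _ p B D S F ∨ hasOrL _ _ _ q B D S F
  | _, _, _, impR p, B, D, S, F => hasOrL _ _ _ p B D S F
  | _, _, _, allL _ p, B, D, S, F => hasOrL _ _ _ p B D S F
  | _, _, _, exR _ p, B, D, S, F => hasOrL _ _ _ p B D S F
  | _, _, _, exL _ _ _ p, B, D, S, F => hasOrL _ _ _ p B D S F
  | _, _, _, allR _ _ _ p, B, D, S, F => hasOrL _ _ _ p B D S F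
  | _, _, _, orLG p q, B, D, S, F => hasOrL _ _ _ p B D S F ∨ hasOrL _ _ _ q B D S F
  | _, _, _, resG p, B, D, S, F => hasOrL _ _ _ p B D S F

end IGProof

/-- In the simplified syntax, `A` ranges over atomic formulas together with
⊤ and ⊥. -/
def AtFm (F : Fm) : Prop := F.isAtom ∨ F = Fm.top ∨ F = Fm.bot

/-- `disjs A [B₁,…,Bₙ]` is the disjunction `A ∨ B₁ ∨ … ∨ Bₙ`. -/
def disjs (A : Fm) : List Fm → Fm
  | [] => A
  | B :: l => Fm.disj A (disjs B l)

mutual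
  /-- Goals in the simplified syntax: G ::= A | G∧G | G∨G | D⊃G | ∃x G. -/
  inductive Goal : Fm → Prop
    | atm {A : Fm} : AtFm A → Goal A
    | conj {a b : Fm} : Goal a → Goal b → Goal (Fm.conj a b)
    | disj {a b : Fm} : Goal a → Goal b → Goal (Fm.disj a b)
    | imp {a b : Fm} : PCl a → Goal b → Goal (Fm.imp a b)
    | ex {a : Fm} : Goal a → Goal (Fm.ex a)

  /-- Program clauses in the simplified syntax:
  D ::= (A∨…∨A) | G⊃(A∨…∨A) | ∀x D. -/
  inductive PCl : Fm → Prop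
    | head {A : Fm} {l : List Fm} : AtFm A → (∀ B ∈ l, AtFm B) → PCl (disjs A l)
    | impHead {g A : Fm} {l : List Fm} : Goal g → AtFm A → (∀ B ∈ l, AtFm B) →
        PCl (Fm.imp g (disjs A l))
    | all {d : Fm} : PCl d → PCl (Fm.all d)
end

/-- The instances `[D]` of a program clause `D`, as pairs whose first
component is `∅` (`none`) or `{G}` (`some G`) and whose second component is
the collection of head atoms. -/
inductive ClInst : Fm → Option Fm → Multiset Fm → Prop
  | head {A : Fm} {l : List Fm} : AtFm A → (∀ B ∈ l, AtFm B) →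
      ClInst (disjs A l) none (A ::ₘ (l : Multiset Fm))
  | impHead {g A : Fm} {l : List Fm} : Goal g → AtFm A → (∀ B ∈ l, AtFm B) →
      ClInst (Fm.imp g (disjs A l)) (some g) (A ::ₘ (l : Multiset Fm))
  | all {d : Fm} {o : Option Fm} {m : Multiset Fm} (t : Tm) :
      ClInst (d.inst t) o m → ClInst (Fm.all d) o m

/-- `[Γ]`: the instances of the clauses in `Γ`. -/
def GammaInst (Γ : Multiset Fm) (o : Option Fm) (m : Multiset Fm) : Prop :=
  ∃ D ∈ Γ, ClInst D o m

/-- The reduced proof system relative to the goal `G`: axioms `Δ → ⊤`, the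
rules RESTART, ATOMIC and BACKCHAIN relativized to `G`, and ∨-R, ∧-R, ⊃-R
and ∃-R. -/
inductive RP (G : Fm) : Multiset Fm → Fm → Prop
  | topAx {Γ : Multiset Fm} : RP G Γ Fm.top
  | restart {Γ : Multiset Fm} {C : Fm} (hC : C.isAtom ∨ C = Fm.bot) (p : RP G Γ G) :
      RP G Γ C
  | atomic {Γ : Multiset Fm} {C : Fm} {m : Multiset Fm} (hC : C.isAtom ∨ C = Fm.bot)
      (h : GammaInst Γ none (C ::ₘ m) ∨ GammaInst Γ none (Fm.bot ::ₘ m))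
      (ps : ∀ A ∈ m, RP G (A ::ₘ Γ) G) : RP G Γ C
  | backchain {Γ : Multiset Fm} {C G' : Fm} {m : Multiset Fm}
      (hC : C.isAtom ∨ C = Fm.bot)
      (h : GammaInst Γ (some G') (C ::ₘ m) ∨ GammaInst Γ (some G') (Fm.bot ::ₘ m))
      (p : RP G Γ G') (ps : ∀ A ∈ m, RP G (A ::ₘ Γ) G) : RP G Γ C
  | orR1 {Γ : Multiset Fm} {B D : Fm} (p : RP G Γ B) : RP G Γ (B.disj D)
  | orR2 {Γ : Multiset Fm} {B D : Fm} (p : RP G Γ D) : RP G Γ (B.disj D)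
  | andR {Γ : Multiset Fm} {B D : Fm} (p : RP G Γ B) (q : RP G Γ D) : RP G Γ (B.conj D)
  | impR {Γ : Multiset Fm} {B D : Fm} (p : RP G (B ::ₘ Γ) D) : RP G Γ (B.imp D)
  | exR {Γ : Multiset Fm} {B : Fm} (t : Tm) (p : RP G Γ (B.inst t)) : RP G Γ (Fm.ex B)

/-! ### Auxiliary machinery -/

deriving instance DecidableEq for Tm
deriving instance DecidableEq for Fm

namespace Tm

/-- Renaming of constants. -/
def rn (σ : ℕ → ℕ) : Tm → Tm
  | var n => var n
  | const c => const (σ c)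

/-- A bound on the constants occurring in a term. -/
def bnd : Tm → ℕ
  | var _ => 0
  | const c => c + 1

theorem bnd_lt {c : ℕ} {t : Tm} (h : t.constIn c) : c < t.bnd := by
  cases t with
  | var n => exact absurd h (by simp [constIn])
  | const d => cases h; simp [bnd]

theorem rn_subst (σ : ℕ → ℕ) (k : ℕ) (u : Tm) :
    ∀ t : Tm, (Tm.subst k u t).rn σ = Tm.subst k (u.rn σ) (t.rn σ)
  | var n => by by_cases h : n = k <;> simp [Tm.subst, rn, h]
  | const c => by simp [Tm.subst, rn]

theorem rn_congr {σ σ' : ℕ → ℕ} :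
    ∀ {t : Tm}, (∀ c, t.constIn c → σ c = σ' c) → t.rn σ = t.rn σ'
  | Tm.var _, _ => rfl
  | Tm.const c, h => by simp [rn, h c rfl]

theorem rn_id : ∀ t : Tm, t.rn id = t
  | var _ => rfl
  | const _ => rfl

end Tm

namespace Fm

/-- Renaming of constants. -/
def rn (σ : ℕ → ℕ) : Fm → Fm
  | top => top
  | bot => bot
  | atom p ts => atom p (ts.map (Tm.rn σ))
  | conj a b => conj (rn σ a) (rn σ b)
  | disj a b => disj (rn σ a) (rn σ b)
  | imp a b => imp (rn σ a) (rn σ b)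
  | ex a => ex (rn σ a)
  | all a => all (rn σ a)

/-- A bound on the constants occurring in a formula. -/
def bnd : Fm → ℕ
  | top => 0
  | bot => 0
  | atom _ ts => (ts.map Tm.bnd).foldr max 0
  | conj a b => max (bnd a) (bnd b)
  | disj a b => max (bnd a) (bnd b)
  | imp a b => max (bnd a) (bnd b)
  | ex a => bnd a
  | all a => bnd a

theorem bnd_lt {c : ℕ} : ∀ {F : Fm}, F.constIn c → c < F.bnd := by
  intro F
  induction F with
  | top => intro h; exact absurd h (by simp [constIn])
  | bot => intro h; exact absurd h (by simp [constIn])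
  | atom p ts =>
    intro h
    obtain ⟨t, ht, hc⟩ := h
    have h1 : c < t.bnd := Tm.bnd_lt hc
    have h2 : t.bnd ≤ (ts.map Tm.bnd).foldr max 0 := by
      clear hc h1
      induction ts with
      | nil => cases ht
      | cons a l ih =>
        rcases List.mem_cons.1 ht with rfl | h
        · simp [List.foldr]
        · simp only [List.map_cons, List.foldr]
          exact le_trans (ih h) (le_max_right _ _)
    exact lt_of_lt_of_le h1 h2
  | conj a b iha ihb =>
    intro h; rcases h with h | h
    · exact lt_of_lt_of_le (iha h) (le_max_left _ _)
    · exact lt_of_lt_of_le (ihb h) (le_max_right _ _)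
  | disj a b iha ihb =>
    intro h; rcases h with h | h
    · exact lt_of_lt_of_le (iha h) (le_max_left _ _)
    · exact lt_of_lt_of_le (ihb h) (le_max_right _ _)
  | imp a b iha ihb =>
    intro h; rcases h with h | h
    · exact lt_of_lt_of_le (iha h) (le_max_left _ _)
    · exact lt_of_lt_of_le (ihb h) (le_max_right _ _)
  | ex a ih => exact ih
  | all a ih => exact ih

theorem not_constIn_of_bnd_le {c : ℕ} {F : Fm} (h : F.bnd ≤ c) : ¬ F.constIn c :=
  fun hc => absurd (bnd_lt hc) (by omega)

theorem rn_subst (σ : ℕ → ℕ) (u : Tm) :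
    ∀ (F : Fm) (k : ℕ), (Fm.subst k u F).rn σ = Fm.subst k (u.rn σ) (F.rn σ) := by
  intro F
  induction F with
  | top => intro k; rfl
  | bot => intro k; rfl
  | atom p ts =>
    intro k
    simp only [Fm.subst, rn, List.map_map, Fm.atom.injEq, true_and]
    exact List.map_congr_left (fun t _ => Tm.rn_subst σ k u t)
  | conj a b iha ihb => intro k; simp [Fm.subst, rn, iha, ihb]
  | disj a b iha ihb => intro k; simp [Fm.subst, rn, iha, ihb]
  | imp a b iha ihb => intro k; simp [Fm.subst, rn, iha, ihb]
  | ex a ih => intro k; simp [Fm.subst, rn, ih]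
  | all a ih => intro k; simp [Fm.subst, rn, ih]

theorem rn_inst (σ : ℕ → ℕ) (u : Tm) (F : Fm) :
    (F.inst u).rn σ = (F.rn σ).inst (u.rn σ) := rn_subst σ u F 0

theorem rn_congr {σ σ' : ℕ → ℕ} :
    ∀ {F : Fm}, (∀ c, F.constIn c → σ c = σ' c) → F.rn σ = F.rn σ' := by
  intro F
  induction F with
  | top => intro _; rfl
  | bot => intro _; rfl
  | atom p ts =>
    intro h
    simp only [rn, atom.injEq, true_and]
    exact List.map_congr_left (fun t ht => Tm.rn_congr (fun c hc => h c ⟨t, ht, hc⟩))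
  | conj a b iha ihb =>
    intro h
    simp only [rn, conj.injEq]
    exact ⟨iha (fun c hc => h c (Or.inl hc)), ihb (fun c hc => h c (Or.inr hc))⟩
  | disj a b iha ihb =>
    intro h
    simp only [rn, disj.injEq]
    exact ⟨iha (fun c hc => h c (Or.inl hc)), ihb (fun c hc => h c (Or.inr hc))⟩
  | imp a b iha ihb =>
    intro h
    simp only [rn, imp.injEq]
    exact ⟨iha (fun c hc => h c (Or.inl hc)), ihb (fun c hc => h c (Or.inr hc))⟩
  | ex a ih => intro h; simp only [rn, ex.injEq]; exact ih h
  | all a ih => intro h; simp only [rn, all.injEq]; exact ih h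

theorem rn_id : ∀ F : Fm, F.rn id = F := by
  intro F
  induction F with
  | top => rfl
  | bot => rfl
  | atom p ts => simp [rn, List.map_congr_left (fun t _ => Tm.rn_id t)]
  | conj a b iha ihb => simp [rn, iha, ihb]
  | disj a b iha ihb => simp [rn, iha, ihb]
  | imp a b iha ihb => simp [rn, iha, ihb]
  | ex a ih => simp [rn, ih]
  | all a ih => simp [rn, ih]

theorem rn_fix {σ : ℕ → ℕ} {F : Fm} (h : ∀ c, F.constIn c → σ c = c) : F.rn σ = F := by
  rw [rn_congr (σ' := id) h, rn_id]

theorem isAtom_rn {σ : ℕ → ℕ} {F : Fm} (h : F.isAtom) : (F.rn σ).isAtom := by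
  cases F <;> simp_all [isAtom, rn]

end Fm

/-- A bound on the constants occurring in a multiset of formulas. -/
def msBnd (Γ : Multiset Fm) : ℕ := (Γ.map Fm.bnd).sum

theorem bnd_le_msBnd {F : Fm} {Γ : Multiset Fm} (h : F ∈ Γ) : F.bnd ≤ msBnd Γ :=
  Multiset.single_le_sum (fun x _ => Nat.zero_le x) _ (Multiset.mem_map_of_mem _ h)

theorem not_constIn_of_mem {c : ℕ} {F : Fm} {Γ : Multiset Fm} (h : F ∈ Γ)
    (hc : msBnd Γ ≤ c) : ¬ F.constIn c :=
  Fm.not_constIn_of_bnd_le (le_trans (bnd_le_msBnd h) hc)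

theorem freshSeq_of_le {c : ℕ} {Γ Δ : Multiset Fm}
    (h1 : msBnd Γ ≤ c) (h2 : msBnd Δ ≤ c) : FreshSeq c Γ Δ :=
  ⟨fun _ hF => not_constIn_of_mem hF h1, fun _ hF => not_constIn_of_mem hF h2⟩

/-! ### `ge` inversion lemmas -/

theorem ge_eq_of_atom {F A : Fm} (h : Fm.ge F A) (hA : A = Fm.bot ∨ A.isAtom) : F = A := by
  cases h with
  | refl => rfl
  | imp => simp [Fm.isAtom] at hA
  | disjl => simp [Fm.isAtom] at hA
  | disjr => simp [Fm.isAtom] at hA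
  | ex => simp [Fm.isAtom] at hA

theorem ge_imp_inv {F A B : Fm} (h : Fm.ge F (Fm.imp A B)) :
    F = Fm.imp A B ∨ Fm.ge F B := by
  cases h with
  | refl => exact Or.inl rfl
  | imp h => exact Or.inr h

theorem ge_disj_inv {F A B : Fm} (h : Fm.ge F (Fm.disj A B)) :
    F = Fm.disj A B ∨ Fm.ge F A ∨ Fm.ge F B := by
  cases h with
  | refl => exact Or.inl rfl
  | disjl h => exact Or.inr (Or.inl h)
  | disjr h => exact Or.inr (Or.inr h)

theorem ge_ex_inv {F A : Fm} (h : Fm.ge F (Fm.ex A)) :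
    F = Fm.ex A ∨ ∃ c, Fm.ge F (A.inst (Tm.const c)) := by
  cases h with
  | refl => exact Or.inl rfl
  | ex c h => exact Or.inr ⟨c, h⟩

theorem ge_all_eq {F A : Fm} (h : Fm.ge F (Fm.all A)) : F = Fm.all A := by
  cases h; rfl

theorem ge_conj_eq {F A B : Fm} (h : Fm.ge F (Fm.conj A B)) : F = Fm.conj A B := by
  cases h; rfl

theorem ge_top_eq {F : Fm} (h : Fm.ge F Fm.top) : F = Fm.top := by
  cases h; rfl

/-! ### `MsGe` lemmas -/

theorem rel_ge_refl (Γ : Multiset Fm) : Multiset.Rel Fm.ge Γ Γ :=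
  Multiset.induction_on Γ Multiset.Rel.zero (fun a _ ih => Multiset.Rel.cons (Fm.ge.refl a) ih)

theorem msge_refl (Γ : Multiset Fm) : MsGe Γ Γ := ⟨Γ, le_refl _, rel_ge_refl Γ⟩

theorem msge_le {Γ₁ Γ₁' Γ₂ : Multiset Fm} (hm : MsGe Γ₁ Γ₂) (h : Γ₁ ≤ Γ₁') : MsGe Γ₁' Γ₂ := by
  obtain ⟨Γ', hle, hrel⟩ := hm
  exact ⟨Γ', le_trans hle h, hrel⟩

theorem msge_cons {F A : Fm} {Γ₁ Γ₂ : Multiset Fm} (h : Fm.ge F A) (hm : MsGe Γ₁ Γ₂) :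
    MsGe (F ::ₘ Γ₁) (A ::ₘ Γ₂) := by
  obtain ⟨Γ', hle, hrel⟩ := hm
  exact ⟨F ::ₘ Γ', Multiset.cons_le_cons F hle, Multiset.Rel.cons h hrel⟩

theorem msge_cons_self {A : Fm} {Γ₁ Γ₂ : Multiset Fm} (hm : MsGe Γ₁ Γ₂) :
    MsGe (A ::ₘ Γ₁) (A ::ₘ Γ₂) := msge_cons (Fm.ge.refl A) hm

theorem msge_weaken {A : Fm} {Γ₁ Γ₂ : Multiset Fm} (hm : MsGe Γ₁ Γ₂) :
    MsGe (A ::ₘ Γ₁) Γ₂ := msge_le hm (Multiset.le_cons_self _ _)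

theorem msge_cons_inv {Γ₁ : Multiset Fm} {A : Fm} {Γ₂ : Multiset Fm}
    (hm : MsGe Γ₁ (A ::ₘ Γ₂)) : ∃ F ∈ Γ₁, Fm.ge F A ∧ MsGe (Γ₁.erase F) Γ₂ := by
  obtain ⟨Γ', hle, hrel⟩ := hm
  rw [Multiset.rel_cons_right] at hrel
  obtain ⟨F, Γ'', hge, hrel', rfl⟩ := hrel
  have hF : F ∈ Γ₁ := Multiset.mem_of_le hle (Multiset.mem_cons_self _ _)
  refine ⟨F, hF, hge, Γ'', ?_, hrel'⟩
  have := Multiset.erase_le_erase F hle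
  rwa [Multiset.erase_cons_head] at this

theorem msge_drop {Γ₁ : Multiset Fm} {A : Fm} {Γ₂ : Multiset Fm}
    (hm : MsGe Γ₁ (A ::ₘ Γ₂)) : MsGe Γ₁ Γ₂ := by
  obtain ⟨F, hF, _, hm'⟩ := msge_cons_inv hm
  exact msge_le hm' (Multiset.erase_le _ _)

theorem msge_map_head {Γ₁ : Multiset Fm} {A A' : Fm} {Γ₂ : Multiset Fm}
    (hm : MsGe Γ₁ (A ::ₘ Γ₂)) (h : ∀ F, Fm.ge F A → Fm.ge F A') : MsGe Γ₁ (A' ::ₘ Γ₂) := by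
  obtain ⟨F, hF, hge, hm'⟩ := msge_cons_inv hm
  have := msge_cons (h F hge) hm'
  rwa [Multiset.cons_erase hF] at this

/-! ### Casts and size -/

namespace CProof

def cA {Γ Γ' Δ : Multiset Fm} (h : Γ = Γ') (p : CProof Γ Δ) : CProof Γ' Δ := h ▸ p

def cB {Γ Δ Δ' : Multiset Fm} (h : Δ = Δ') (p : CProof Γ Δ) : CProof Γ Δ' := h ▸ p

@[simp] theorem mu_cA {Γ Γ' Δ : Multiset Fm} (h : Γ = Γ') (p : CProof Γ Δ) :
    (p.cA h).mu = p.mu := by subst h; rfl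

@[simp] theorem mu_cB {Γ Δ Δ' : Multiset Fm} (h : Δ = Δ') (p : CProof Γ Δ) :
    (p.cB h).mu = p.mu := by subst h; rfl

@[simp] theorem isI_cA {Γ Γ' Δ : Multiset Fm} (h : Γ = Γ') (p : CProof Γ Δ) :
    (p.cA h).isI ↔ p.isI := by subst h; rfl

@[simp] theorem isI_cB {Γ Δ Δ' : Multiset Fm} (h : Δ = Δ') (p : CProof Γ Δ) :
    (p.cB h).isI ↔ p.isI := by subst h; rfl

theorem isI_cA' {Γ Γ' Δ : Multiset Fm} (h : Γ = Γ') (p : CProof Γ Δ) (hp : p.isI) :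
    (p.cA h).isI := (isI_cA h p).2 hp

theorem isI_cB' {Γ Δ Δ' : Multiset Fm} (h : Δ = Δ') (p : CProof Γ Δ) (hp : p.isI) :
    (p.cB h).isI := (isI_cB h p).2 hp

/-- The number of sequents in a C-proof. -/
def csize : ∀ {Γ Δ : Multiset Fm}, CProof Γ Δ → ℕ
  | _, _, ax _ => 1
  | _, _, contrL p => csize p + 1
  | _, _, contrR p => csize p + 1
  | _, _, botR p => csize p + 1
  | _, _, andL p => csize p + 1
  | _, _, andR p q => csize p + csize q + 1
  | _, _, orL p q => csize p + csize q + 1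
  | _, _, orR1 p => csize p + 1
  | _, _, orR2 p => csize p + 1
  | _, _, impL p q => csize p + csize q + 1
  | _, _, impR p => csize p + 1
  | _, _, allL _ p => csize p + 1
  | _, _, exR _ p => csize p + 1
  | _, _, exL _ _ p => csize p + 1
  | _, _, allR _ _ p => csize p + 1

@[simp] theorem csize_cA {Γ Γ' Δ : Multiset Fm} (h : Γ = Γ') (p : CProof Γ Δ) :
    (p.cA h).csize = p.csize := by subst h; rfl

@[simp] theorem csize_cB {Γ Δ Δ' : Multiset Fm} (h : Δ = Δ') (p : CProof Γ Δ) :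
    (p.cB h).csize = p.csize := by subst h; rfl

end CProof

/-! ### mu of I-proofs, and basic facts about the designated occurrence -/

namespace CProof

theorem mu_of_isI : ∀ {Γ Δ : Multiset Fm} (p : CProof Γ Δ), p.isI → p.mu = 0 := by
  intro Γ Δ p
  induction p with
  | ax h => intro _; rfl
  | contrL p ih => intro h; exact ih h.2
  | contrR p ih => intro h; exact ih h.2
  | botR p ih => intro h; exact ih h.2
  | andL p ih => intro h; exact ih h.2
  | andR p q ihp ihq =>
    intro h
    simp only [mu, ihp h.2.1, ihq h.2.2]
  | @orL B D Γ Δ p q ihp ihq =>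
    intro h
    obtain ⟨hcard, hp, hq⟩ := h
    obtain ⟨F, rfl⟩ := Multiset.card_eq_one.1 hcard
    have hF : ∃ F' ∈ ({F} : Multiset Fm), IProv (B ::ₘ Γ) F' ∧ IProv (D ::ₘ Γ) F' :=
      ⟨F, Multiset.mem_singleton_self F, ⟨p, hp⟩, ⟨q, hq⟩⟩
    simp only [mu, ihp hp, ihq hq, if_pos hF]
  | orR1 p ih => intro h; exact ih h.2
  | orR2 p ih => intro h; exact ih h.2
  | impL p q ihp ihq =>
    intro h
    simp only [mu, ihp h.2.1, ihq h.2.2]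
  | @impR B D Γ Δ p ih =>
    intro h
    obtain ⟨hcard, hp⟩ := h
    have hΔ : Δ = 0 := by
      rw [Multiset.card_cons] at hcard
      exact Multiset.card_eq_zero.1 (by omega)
    subst hΔ
    have : IProv (B ::ₘ Γ) D := ⟨p.cB (by rfl), (isI_cB _ _).2 hp⟩
    simp only [mu, ih hp, if_pos this]
  | allL t p ih => intro h; exact ih h.2
  | exR t p ih => intro h; exact ih h.2
  | exL c hc p ih => intro h; exact ih h.2
  | allR c hc p ih => intro h; exact ih h.2

variable {B D : Fm} {S P : Multiset Fm}

theorem one_le_mu : ∀ {Γ Δ : Multiset Fm} (p : CProof Γ Δ),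
    hasImpR Γ Δ p B S P D → ¬ IProv (B ::ₘ S) D → 1 ≤ p.mu := by
  intro Γ Δ p
  induction p with
  | ax h => intro h _; exact absurd h not_false
  | contrL p ih => exact ih
  | contrR p ih => exact ih
  | botR p ih => exact ih
  | andL p ih => exact ih
  | andR p q ihp ihq =>
    intro h h1
    rcases h with h | h
    · exact le_trans (ihp h h1) (by simp only [mu]; omega)
    · exact le_trans (ihq h h1) (by simp only [mu]; omega)
  | orL p q ihp ihq =>
    intro h h1
    rcases h with h | h
    · exact le_trans (ihp h h1) (by simp only [mu]; omega)
    · exact le_trans (ihq h h1) (by simp only [mu]; omega)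
  | orR1 p ih => exact ih
  | orR2 p ih => exact ih
  | impL p q ihp ihq =>
    intro h h1
    rcases h with h | h
    · exact le_trans (ihp h h1) (by simp only [mu]; omega)
    · exact le_trans (ihq h h1) (by simp only [mu]; omega)
  | @impR B' D' Γ' Δ' p ih =>
    intro h h1
    rcases h with ⟨rfl, rfl, rfl, rfl⟩ | h
    · simp only [mu, if_neg h1]; omega
    · exact le_trans (ih h h1) (by simp only [mu]; omega)
  | allL t p ih => exact ih
  | exR t p ih => exact ih
  | exL c hc p ih => exact ih
  | allR c hc p ih => exact ih

theorem msge_of_hasImpR : ∀ {Γ Δ : Multiset Fm} (p : CProof Γ Δ),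
    hasImpR Γ Δ p B S P D → MsGe (B ::ₘ S) Γ := by
  intro Γ Δ p
  induction p with
  | ax h => intro h; exact absurd h not_false
  | contrL p ih =>
    intro h
    have := ih h
    obtain ⟨F, hF, hge, hm⟩ := msge_cons_inv this
    have h2 := msge_map_head (msge_drop (msge_cons hge hm)) (fun F h => h)
    rwa [Multiset.cons_erase hF] at h2
  | contrR p ih => exact ih
  | botR p ih => exact ih
  | andL p ih =>
    intro h
    exact msge_drop (msge_drop (ih h))
  | andR p q ihp ihq =>
    intro h
    rcases h with h | h
    · exact ihp h
    · exact ihq h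
  | orL p q ihp ihq =>
    intro h
    rcases h with h | h
    · exact msge_map_head (ihp h) (fun F h => Fm.ge.disjl h)
    · exact msge_map_head (ihq h) (fun F h => Fm.ge.disjr h)
  | orR1 p ih => exact ih
  | orR2 p ih => exact ih
  | impL p q ihp ihq =>
    intro h
    rcases h with h | h
    · exact ihp h
    · exact msge_map_head (ihq h) (fun F h => Fm.ge.imp h)
  | @impR B' D' Γ' Δ' p ih =>
    intro h
    rcases h with ⟨rfl, rfl, rfl, rfl⟩ | h
    · exact ⟨_, Multiset.le_cons_self _ _, rel_ge_refl _⟩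
    · exact msge_drop (ih h)
  | allL t p ih =>
    intro h
    exact msge_drop (ih h)
  | exR t p ih => exact ih
  | @exL B' Γ' Δ' c hc p ih =>
    intro h
    exact msge_map_head (ih h) (fun F h => Fm.ge.ex c h)
  | allR c hc p ih => exact ih

end CProof

/-! ### D/G formulas closed under substitution -/

theorem dg_subst : ∀ (F : Fm) (k : ℕ) (u : Tm),
    (DFm F → DFm (Fm.subst k u F)) ∧ (GFm F → GFm (Fm.subst k u F)) := by
  intro F
  induction F with
  | top => exact fun _ _ => ⟨fun _ => DFm.top, fun _ => GFm.top⟩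
  | bot => exact fun _ _ => ⟨fun _ => DFm.bot, fun _ => GFm.bot⟩
  | atom p ts => exact fun _ _ => ⟨fun _ => DFm.atom, fun _ => GFm.atom⟩
  | conj a b iha ihb =>
    intro k u
    constructor
    · intro h; cases h with
      | conj ha hb => exact DFm.conj ((iha k u).1 ha) ((ihb k u).1 hb)
    · intro h; cases h with
      | conj ha hb => exact GFm.conj ((iha k u).2 ha) ((ihb k u).2 hb)
  | disj a b iha ihb =>
    intro k u
    constructor
    · intro h; cases h with
      | disj ha hb => exact DFm.disj ((iha k u).1 ha) ((ihb k u).1 hb)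
    · intro h; cases h with
      | disj ha hb => exact GFm.disj ((iha k u).2 ha) ((ihb k u).2 hb)
  | imp a b iha ihb =>
    intro k u
    constructor
    · intro h; cases h with
      | imp ha hb => exact DFm.imp ((iha k u).2 ha) ((ihb k u).1 hb)
    · intro h; cases h with
      | imp ha hb => exact GFm.imp ((iha k u).1 ha) ((ihb k u).2 hb)
  | ex a ih =>
    intro k u
    constructor
    · intro h; cases h with
      | ex ha => exact DFm.ex ((ih (k+1) u).1 ha)
    · intro h; cases h with
      | ex ha => exact GFm.ex ((ih (k+1) u).2 ha)
  | all a ih =>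
    intro k u
    constructor
    · intro h; cases h with
      | all ha => exact DFm.all ((ih (k+1) u).1 ha)
    · intro h; exact absurd h (by intro h; cases h)

/-! ### Renaming of constants in proofs -/

/-- Renaming applied to a multiset of formulas. -/
def mrn (σ : ℕ → ℕ) (Γ : Multiset Fm) : Multiset Fm := Γ.map (Fm.rn σ)

@[simp] theorem mrn_cons (σ : ℕ → ℕ) (F : Fm) (Γ : Multiset Fm) :
    mrn σ (F ::ₘ Γ) = F.rn σ ::ₘ mrn σ Γ := Multiset.map_cons _ _ _

@[simp] theorem mrn_add (σ : ℕ → ℕ) (Γ Δ : Multiset Fm) :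
    mrn σ (Γ + Δ) = mrn σ Γ + mrn σ Δ := Multiset.map_add _ _ _

@[simp] theorem mrn_zero (σ : ℕ → ℕ) : mrn σ 0 = 0 := rfl

@[simp] theorem card_mrn (σ : ℕ → ℕ) (Γ : Multiset Fm) :
    Multiset.card (mrn σ Γ) = Multiset.card Γ := Multiset.card_map _ _

theorem rn_update_of_fresh {σ : ℕ → ℕ} {c c' : ℕ} {F : Fm}
    (h : ¬ F.constIn c) : F.rn (Function.update σ c c') = F.rn σ :=
  Fm.rn_congr (fun d hd => Function.update_of_ne (fun e => h (by rwa [e] at hd)) _ _)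

theorem mrn_update_of_fresh {σ : ℕ → ℕ} {c c' : ℕ} {Γ : Multiset Fm}
    (h : ∀ F ∈ Γ, ¬ F.constIn c) : mrn (Function.update σ c c') Γ = mrn σ Γ :=
  Multiset.map_congr rfl (fun F hF => rn_update_of_fresh (h F hF))

theorem rn_inst_const (σ : ℕ → ℕ) (c : ℕ) (F : Fm) :
    (F.inst (Tm.const c)).rn σ = (F.rn σ).inst (Tm.const (σ c)) := Fm.rn_inst σ _ F

theorem axSeq_rn {Γ Δ : Multiset Fm} (σ : ℕ → ℕ) (h : AxSeq Γ Δ) :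
    AxSeq (mrn σ Γ) (mrn σ Δ) := by
  rcases h with h | ⟨A, hA, h1, h2⟩
  · exact Or.inl (by simpa [mrn, Fm.rn] using Multiset.mem_map_of_mem (Fm.rn σ) h)
  · refine Or.inr ⟨A.rn σ, ?_, Multiset.mem_map_of_mem _ h1, Multiset.mem_map_of_mem _ h2⟩
    rcases hA with rfl | hA
    · exact Or.inl rfl
    · exact Or.inr (Fm.isAtom_rn hA)

namespace CProof

theorem rn_isI : ∀ {Γ Δ : Multiset Fm} (p : CProof Γ Δ) (σ : ℕ → ℕ),
    ∃ p' : CProof (mrn σ Γ) (mrn σ Δ), p'.csize = p.csize ∧ (p.isI → p'.isI) := by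
  intro Γ Δ p
  induction p with
  | ax h =>
    intro σ
    exact ⟨ax (axSeq_rn σ h), rfl, fun hI => by simpa [isI] using hI⟩
  | @contrL B₁ Γ₀ Δ p ih =>
    intro σ
    obtain ⟨q, hs, hi⟩ := ih σ
    have e1 : mrn σ (B₁ ::ₘ B₁ ::ₘ Γ₀) = B₁.rn σ ::ₘ B₁.rn σ ::ₘ mrn σ Γ₀ := by simp
    have e2 : B₁.rn σ ::ₘ mrn σ Γ₀ = mrn σ (B₁ ::ₘ Γ₀) := by simp
    refine ⟨(contrL (q.cA e1)).cA e2, by simp [csize, hs], fun hI => ?_⟩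
    simp only [isI_cA, isI_cB, isI]
    exact ⟨by simpa using hI.1, hi hI.2⟩
  | @contrR B₁ Γ₀ Δ p ih =>
    intro σ
    obtain ⟨q, hs, hi⟩ := ih σ
    have e1 : mrn σ (B₁ ::ₘ B₁ ::ₘ Δ) = B₁.rn σ ::ₘ B₁.rn σ ::ₘ mrn σ Δ := by simp
    have e2 : B₁.rn σ ::ₘ mrn σ Δ = mrn σ (B₁ ::ₘ Δ) := by simp
    refine ⟨(contrR (q.cB e1)).cB e2, by simp [csize, hs], fun hI => ?_⟩
    simp only [isI_cA, isI_cB, isI]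
    exact ⟨by simpa using hI.1, hi hI.2⟩
  | @botR D₁ Γ₀ Δ p ih =>
    intro σ
    obtain ⟨q, hs, hi⟩ := ih σ
    have e1 : mrn σ (Fm.bot ::ₘ Δ) = Fm.bot ::ₘ mrn σ Δ := by simp [Fm.rn]
    have e2 : D₁.rn σ ::ₘ mrn σ Δ = mrn σ (D₁ ::ₘ Δ) := by simp
    refine ⟨(botR (D := D₁.rn σ) (q.cB e1)).cB e2, by simp [csize, hs], fun hI => ?_⟩
    simp only [isI_cA, isI_cB, isI]
    exact ⟨by simpa using hI.1, hi hI.2⟩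
  | @andL B₁ D₁ Γ₀ Δ p ih =>
    intro σ
    obtain ⟨q, hs, hi⟩ := ih σ
    have e1 : mrn σ (B₁ ::ₘ D₁ ::ₘ (B₁.conj D₁) ::ₘ Γ₀)
        = B₁.rn σ ::ₘ D₁.rn σ ::ₘ ((B₁.rn σ).conj (D₁.rn σ)) ::ₘ mrn σ Γ₀ := by
      simp [Fm.rn]
    have e2 : ((B₁.rn σ).conj (D₁.rn σ)) ::ₘ mrn σ Γ₀ = mrn σ ((B₁.conj D₁) ::ₘ Γ₀) := by
      simp [Fm.rn]
    refine ⟨(andL (q.cA e1)).cA e2, by simp [csize, hs], fun hI => ?_⟩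
    simp only [isI_cA, isI_cB, isI]
    exact ⟨by simpa using hI.1, hi hI.2⟩
  | @andR B₁ D₁ Γ₀ Δ p q ihp ihq =>
    intro σ
    obtain ⟨q₁, hs₁, hi₁⟩ := ihp σ
    obtain ⟨q₂, hs₂, hi₂⟩ := ihq σ
    have e1 : mrn σ (B₁ ::ₘ Δ) = B₁.rn σ ::ₘ mrn σ Δ := by simp
    have e2 : mrn σ (D₁ ::ₘ Δ) = D₁.rn σ ::ₘ mrn σ Δ := by simp
    have e3 : ((B₁.rn σ).conj (D₁.rn σ)) ::ₘ mrn σ Δ = mrn σ ((B₁.conj D₁) ::ₘ Δ) := by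
      simp [Fm.rn]
    refine ⟨(andR (q₁.cB e1) (q₂.cB e2)).cB e3, by simp [csize, hs₁, hs₂], fun hI => ?_⟩
    simp only [isI_cA, isI_cB, isI]
    exact ⟨by simpa using hI.1, hi₁ hI.2.1, hi₂ hI.2.2⟩
  | @orL B₁ D₁ Γ₀ Δ p q ihp ihq =>
    intro σ
    obtain ⟨q₁, hs₁, hi₁⟩ := ihp σ
    obtain ⟨q₂, hs₂, hi₂⟩ := ihq σ
    have e1 : mrn σ (B₁ ::ₘ Γ₀) = B₁.rn σ ::ₘ mrn σ Γ₀ := by simp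
    have e2 : mrn σ (D₁ ::ₘ Γ₀) = D₁.rn σ ::ₘ mrn σ Γ₀ := by simp
    have e3 : ((B₁.rn σ).disj (D₁.rn σ)) ::ₘ mrn σ Γ₀ = mrn σ ((B₁.disj D₁) ::ₘ Γ₀) := by
      simp [Fm.rn]
    refine ⟨(orL (q₁.cA e1) (q₂.cA e2)).cA e3, by simp [csize, hs₁, hs₂], fun hI => ?_⟩
    simp only [isI_cA, isI_cB, isI]
    exact ⟨by simpa using hI.1, hi₁ hI.2.1, hi₂ hI.2.2⟩
  | @orR1 B₁ D₁ Γ₀ Δ p ih =>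
    intro σ
    obtain ⟨q, hs, hi⟩ := ih σ
    have e1 : mrn σ (B₁ ::ₘ Δ) = B₁.rn σ ::ₘ mrn σ Δ := by simp
    have e2 : ((B₁.rn σ).disj (D₁.rn σ)) ::ₘ mrn σ Δ = mrn σ ((B₁.disj D₁) ::ₘ Δ) := by
      simp [Fm.rn]
    refine ⟨(orR1 (D := D₁.rn σ) (q.cB e1)).cB e2, by simp [csize, hs], fun hI => ?_⟩
    simp only [isI_cA, isI_cB, isI]
    exact ⟨by simpa using hI.1, hi hI.2⟩
  | @orR2 B₁ D₁ Γ₀ Δ p ih =>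
    intro σ
    obtain ⟨q, hs, hi⟩ := ih σ
    have e1 : mrn σ (D₁ ::ₘ Δ) = D₁.rn σ ::ₘ mrn σ Δ := by simp
    have e2 : ((B₁.rn σ).disj (D₁.rn σ)) ::ₘ mrn σ Δ = mrn σ ((B₁.disj D₁) ::ₘ Δ) := by
      simp [Fm.rn]
    refine ⟨(orR2 (B := B₁.rn σ) (q.cB e1)).cB e2, by simp [csize, hs], fun hI => ?_⟩
    simp only [isI_cA, isI_cB, isI]
    exact ⟨by simpa using hI.1, hi hI.2⟩
  | @impL B₁ D₁ Γ₀ Δ' Θ p q ihp ihq =>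
    intro σ
    obtain ⟨q₁, hs₁, hi₁⟩ := ihp σ
    obtain ⟨q₂, hs₂, hi₂⟩ := ihq σ
    have e1 : mrn σ ((B₁.imp D₁) ::ₘ Γ₀) = ((B₁.rn σ).imp (D₁.rn σ)) ::ₘ mrn σ Γ₀ := by
      simp [Fm.rn]
    have e2 : mrn σ (B₁ ::ₘ Δ') = B₁.rn σ ::ₘ mrn σ Δ' := by simp
    have e3 : mrn σ (D₁ ::ₘ Γ₀) = D₁.rn σ ::ₘ mrn σ Γ₀ := by simp
    have e4 : mrn σ Δ' + mrn σ Θ = mrn σ (Δ' + Θ) := by simp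
    refine ⟨((impL ((q₁.cA e1).cB e2) (q₂.cA e3)).cA e1.symm).cB e4,
      by simp [csize, hs₁, hs₂], fun hI => ?_⟩
    simp only [isI_cA, isI_cB, isI]
    exact ⟨by simpa using hI.1, hi₁ hI.2.1, hi₂ hI.2.2⟩
  | @impR B₁ D₁ Γ₀ Δ p ih =>
    intro σ
    obtain ⟨q, hs, hi⟩ := ih σ
    have e1 : mrn σ (B₁ ::ₘ Γ₀) = B₁.rn σ ::ₘ mrn σ Γ₀ := by simp
    have e2 : mrn σ (D₁ ::ₘ Δ) = D₁.rn σ ::ₘ mrn σ Δ := by simp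
    have e3 : ((B₁.rn σ).imp (D₁.rn σ)) ::ₘ mrn σ Δ = mrn σ ((B₁.imp D₁) ::ₘ Δ) := by
      simp [Fm.rn]
    refine ⟨(impR ((q.cA e1).cB e2)).cB e3, by simp [csize, hs], fun hI => ?_⟩
    simp only [isI_cA, isI_cB, isI]
    exact ⟨by simpa using hI.1, hi hI.2⟩
  | @allL B₁ Γ₀ Δ t p ih =>
    intro σ
    obtain ⟨q, hs, hi⟩ := ih σ
    have e1 : mrn σ ((B₁.inst t) ::ₘ (Fm.all B₁) ::ₘ Γ₀)
        = ((B₁.rn σ).inst (t.rn σ)) ::ₘ (Fm.all (B₁.rn σ)) ::ₘ mrn σ Γ₀ := by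
      simp [Fm.rn, Fm.rn_inst]
    have e2 : (Fm.all (B₁.rn σ)) ::ₘ mrn σ Γ₀ = mrn σ ((Fm.all B₁) ::ₘ Γ₀) := by
      simp [Fm.rn]
    refine ⟨(allL (t.rn σ) (q.cA e1)).cA e2, by simp [csize, hs], fun hI => ?_⟩
    simp only [isI_cA, isI_cB, isI]
    exact ⟨by simpa using hI.1, hi hI.2⟩
  | @exR B₁ Γ₀ Δ t p ih =>
    intro σ
    obtain ⟨q, hs, hi⟩ := ih σ
    have e1 : mrn σ ((B₁.inst t) ::ₘ Δ) = ((B₁.rn σ).inst (t.rn σ)) ::ₘ mrn σ Δ := by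
      simp [Fm.rn_inst]
    have e2 : (Fm.ex (B₁.rn σ)) ::ₘ mrn σ Δ = mrn σ ((Fm.ex B₁) ::ₘ Δ) := by
      simp [Fm.rn]
    refine ⟨(exR (t.rn σ) (q.cB e1)).cB e2, by simp [csize, hs], fun hI => ?_⟩
    simp only [isI_cA, isI_cB, isI]
    exact ⟨by simpa using hI.1, hi hI.2⟩
  | @exL B₁ Γ₀ Δ c hc p ih =>
    intro σ
    set c' := msBnd (mrn σ (Fm.ex B₁ ::ₘ Γ₀)) + msBnd (mrn σ Δ) with hc'def
    have hcB : ¬ (Fm.ex B₁).constIn c := hc.1 _ (Multiset.mem_cons_self _ _)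
    have hcΓ : ∀ F ∈ Γ₀, ¬ F.constIn c := fun F hF => hc.1 F (Multiset.mem_cons_of_mem hF)
    obtain ⟨q, hs, hi⟩ := ih (Function.update σ c c')
    have e1 : mrn (Function.update σ c c') (B₁.inst (Tm.const c) ::ₘ Γ₀)
        = (B₁.rn σ).inst (Tm.const c') ::ₘ mrn σ Γ₀ := by
      rw [mrn_cons, mrn_update_of_fresh hcΓ, rn_inst_const, Function.update_self,
        rn_update_of_fresh (show ¬ Fm.constIn c B₁ from hcB)]
    have e2 : mrn (Function.update σ c c') Δ = mrn σ Δ := mrn_update_of_fresh hc.2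
    have hfr : FreshSeq c' (Fm.ex (B₁.rn σ) ::ₘ mrn σ Γ₀) (mrn σ Δ) := by
      have e3 : (Fm.ex (B₁.rn σ) ::ₘ mrn σ Γ₀) = mrn σ (Fm.ex B₁ ::ₘ Γ₀) := by
        simp [Fm.rn]
      rw [e3]
      exact freshSeq_of_le (by omega) (by omega)
    have e4 : (Fm.ex (B₁.rn σ)) ::ₘ mrn σ Γ₀ = mrn σ ((Fm.ex B₁) ::ₘ Γ₀) := by
      simp [Fm.rn]
    refine ⟨(exL c' hfr ((q.cA e1).cB e2)).cA e4, by simp [csize, hs], fun hI => ?_⟩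
    simp only [isI_cA, isI_cB, isI]
    exact ⟨by simpa using hI.1, hi hI.2⟩
  | @allR B₁ Γ₀ Δ c hc p ih =>
    intro σ
    set c' := msBnd (mrn σ Γ₀) + msBnd (mrn σ (Fm.all B₁ ::ₘ Δ)) with hc'def
    have hcB : ¬ (Fm.all B₁).constIn c := hc.2 _ (Multiset.mem_cons_self _ _)
    have hcΔ : ∀ F ∈ Δ, ¬ F.constIn c := fun F hF => hc.2 F (Multiset.mem_cons_of_mem hF)
    obtain ⟨q, hs, hi⟩ := ih (Function.update σ c c')
    have e1 : mrn (Function.update σ c c') Γ₀ = mrn σ Γ₀ := mrn_update_of_fresh hc.1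
    have e2 : mrn (Function.update σ c c') (B₁.inst (Tm.const c) ::ₘ Δ)
        = (B₁.rn σ).inst (Tm.const c') ::ₘ mrn σ Δ := by
      rw [mrn_cons, mrn_update_of_fresh hcΔ, rn_inst_const, Function.update_self,
        rn_update_of_fresh (show ¬ Fm.constIn c B₁ from hcB)]
    have hfr : FreshSeq c' (mrn σ Γ₀) (Fm.all (B₁.rn σ) ::ₘ mrn σ Δ) := by
      have e3 : (Fm.all (B₁.rn σ) ::ₘ mrn σ Δ) = mrn σ (Fm.all B₁ ::ₘ Δ) := by
        simp [Fm.rn]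
      rw [e3]
      exact freshSeq_of_le (by omega) (by omega)
    have e4 : (Fm.all (B₁.rn σ)) ::ₘ mrn σ Δ = mrn σ ((Fm.all B₁) ::ₘ Δ) := by
      simp [Fm.rn]
    refine ⟨(allR c' hfr ((q.cA e1).cB e2)).cB e4, by simp [csize, hs], fun hI => ?_⟩
    simp only [isI_cA, isI_cB, isI]
    exact ⟨by simpa using hI.1, hi hI.2⟩

end CProof

/-- Renaming preserves intuitionistic provability. -/
theorem IProv.rn {Γ : Multiset Fm} {F : Fm} (σ : ℕ → ℕ) (h : IProv Γ F) :
    IProv (mrn σ Γ) (F.rn σ) := by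
  obtain ⟨p, hp⟩ := h
  obtain ⟨p', _, hi⟩ := CProof.rn_isI p σ
  exact ⟨p'.cB (by simp [mrn]), CProof.isI_cB' _ _ (hi hp)⟩

namespace CProof

theorem rn_mu : ∀ {Γ Δ : Multiset Fm} (p : CProof Γ Δ) (σ : ℕ → ℕ),
    ∃ p' : CProof (mrn σ Γ) (mrn σ Δ), p'.csize = p.csize ∧ p'.mu ≤ p.mu := by
  intro Γ Δ p
  induction p with
  | ax h =>
    intro σ
    exact ⟨ax (axSeq_rn σ h), rfl, le_refl _⟩
  | @contrL B₁ Γ₀ Δ p ih =>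
    intro σ
    obtain ⟨q, hs, hm⟩ := ih σ
    have e1 : mrn σ (B₁ ::ₘ B₁ ::ₘ Γ₀) = B₁.rn σ ::ₘ B₁.rn σ ::ₘ mrn σ Γ₀ := by simp
    have e2 : B₁.rn σ ::ₘ mrn σ Γ₀ = mrn σ (B₁ ::ₘ Γ₀) := by simp
    exact ⟨(contrL (q.cA e1)).cA e2, by simp [csize, hs], by simpa [mu] using hm⟩
  | @contrR B₁ Γ₀ Δ p ih =>
    intro σ
    obtain ⟨q, hs, hm⟩ := ih σ
    have e1 : mrn σ (B₁ ::ₘ B₁ ::ₘ Δ) = B₁.rn σ ::ₘ B₁.rn σ ::ₘ mrn σ Δ := by simp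
    have e2 : B₁.rn σ ::ₘ mrn σ Δ = mrn σ (B₁ ::ₘ Δ) := by simp
    exact ⟨(contrR (q.cB e1)).cB e2, by simp [csize, hs], by simpa [mu] using hm⟩
  | @botR D₁ Γ₀ Δ p ih =>
    intro σ
    obtain ⟨q, hs, hm⟩ := ih σ
    have e1 : mrn σ (Fm.bot ::ₘ Δ) = Fm.bot ::ₘ mrn σ Δ := by simp [Fm.rn]
    have e2 : D₁.rn σ ::ₘ mrn σ Δ = mrn σ (D₁ ::ₘ Δ) := by simp
    exact ⟨(botR (D := D₁.rn σ) (q.cB e1)).cB e2, by simp [csize, hs],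
      by simpa [mu] using hm⟩
  | @andL B₁ D₁ Γ₀ Δ p ih =>
    intro σ
    obtain ⟨q, hs, hm⟩ := ih σ
    have e1 : mrn σ (B₁ ::ₘ D₁ ::ₘ (B₁.conj D₁) ::ₘ Γ₀)
        = B₁.rn σ ::ₘ D₁.rn σ ::ₘ ((B₁.rn σ).conj (D₁.rn σ)) ::ₘ mrn σ Γ₀ := by
      simp [Fm.rn]
    have e2 : ((B₁.rn σ).conj (D₁.rn σ)) ::ₘ mrn σ Γ₀ = mrn σ ((B₁.conj D₁) ::ₘ Γ₀) := by
      simp [Fm.rn]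
    exact ⟨(andL (q.cA e1)).cA e2, by simp [csize, hs], by simpa [mu] using hm⟩
  | @andR B₁ D₁ Γ₀ Δ p q ihp ihq =>
    intro σ
    obtain ⟨q₁, hs₁, hm₁⟩ := ihp σ
    obtain ⟨q₂, hs₂, hm₂⟩ := ihq σ
    have e1 : mrn σ (B₁ ::ₘ Δ) = B₁.rn σ ::ₘ mrn σ Δ := by simp
    have e2 : mrn σ (D₁ ::ₘ Δ) = D₁.rn σ ::ₘ mrn σ Δ := by simp
    have e3 : ((B₁.rn σ).conj (D₁.rn σ)) ::ₘ mrn σ Δ = mrn σ ((B₁.conj D₁) ::ₘ Δ) := by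
      simp [Fm.rn]
    exact ⟨(andR (q₁.cB e1) (q₂.cB e2)).cB e3, by simp [csize, hs₁, hs₂],
      by simp only [mu, mu_cB]; omega⟩
  | @orL B₁ D₁ Γ₀ Δ p q ihp ihq =>
    intro σ
    obtain ⟨q₁, hs₁, hm₁⟩ := ihp σ
    obtain ⟨q₂, hs₂, hm₂⟩ := ihq σ
    have e1 : mrn σ (B₁ ::ₘ Γ₀) = B₁.rn σ ::ₘ mrn σ Γ₀ := by simp
    have e2 : mrn σ (D₁ ::ₘ Γ₀) = D₁.rn σ ::ₘ mrn σ Γ₀ := by simp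
    have e3 : ((B₁.rn σ).disj (D₁.rn σ)) ::ₘ mrn σ Γ₀ = mrn σ ((B₁.disj D₁) ::ₘ Γ₀) := by
      simp [Fm.rn]
    refine ⟨(orL (q₁.cA e1) (q₂.cA e2)).cA e3, by simp [csize, hs₁, hs₂], ?_⟩
    simp only [mu, mu_cA]
    have hcond : (∃ F ∈ Δ, IProv (B₁ ::ₘ Γ₀) F ∧ IProv (D₁ ::ₘ Γ₀) F) →
        (∃ F ∈ mrn σ Δ, IProv (B₁.rn σ ::ₘ mrn σ Γ₀) F ∧ IProv (D₁.rn σ ::ₘ mrn σ Γ₀) F) := by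
      rintro ⟨F, hF, h1, h2⟩
      refine ⟨F.rn σ, Multiset.mem_map_of_mem _ hF, ?_, ?_⟩
      · have := h1.rn σ; rwa [mrn_cons] at this
      · have := h2.rn σ; rwa [mrn_cons] at this
    by_cases h : ∃ F ∈ Δ, IProv (B₁ ::ₘ Γ₀) F ∧ IProv (D₁ ::ₘ Γ₀) F
    · rw [if_pos h, if_pos (hcond h)]; omega
    · rw [if_neg h]
      split <;> omega
  | @orR1 B₁ D₁ Γ₀ Δ p ih =>
    intro σ
    obtain ⟨q, hs, hm⟩ := ih σ
    have e1 : mrn σ (B₁ ::ₘ Δ) = B₁.rn σ ::ₘ mrn σ Δ := by simp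
    have e2 : ((B₁.rn σ).disj (D₁.rn σ)) ::ₘ mrn σ Δ = mrn σ ((B₁.disj D₁) ::ₘ Δ) := by
      simp [Fm.rn]
    exact ⟨(orR1 (D := D₁.rn σ) (q.cB e1)).cB e2, by simp [csize, hs],
      by simpa [mu] using hm⟩
  | @orR2 B₁ D₁ Γ₀ Δ p ih =>
    intro σ
    obtain ⟨q, hs, hm⟩ := ih σ
    have e1 : mrn σ (D₁ ::ₘ Δ) = D₁.rn σ ::ₘ mrn σ Δ := by simp
    have e2 : ((B₁.rn σ).disj (D₁.rn σ)) ::ₘ mrn σ Δ = mrn σ ((B₁.disj D₁) ::ₘ Δ) := by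
      simp [Fm.rn]
    exact ⟨(orR2 (B := B₁.rn σ) (q.cB e1)).cB e2, by simp [csize, hs],
      by simpa [mu] using hm⟩
  | @impL B₁ D₁ Γ₀ Δ' Θ p q ihp ihq =>
    intro σ
    obtain ⟨q₁, hs₁, hm₁⟩ := ihp σ
    obtain ⟨q₂, hs₂, hm₂⟩ := ihq σ
    have e1 : mrn σ ((B₁.imp D₁) ::ₘ Γ₀) = ((B₁.rn σ).imp (D₁.rn σ)) ::ₘ mrn σ Γ₀ := by
      simp [Fm.rn]
    have e2 : mrn σ (B₁ ::ₘ Δ') = B₁.rn σ ::ₘ mrn σ Δ' := by simp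
    have e3 : mrn σ (D₁ ::ₘ Γ₀) = D₁.rn σ ::ₘ mrn σ Γ₀ := by simp
    have e4 : mrn σ Δ' + mrn σ Θ = mrn σ (Δ' + Θ) := by simp
    exact ⟨((impL ((q₁.cA e1).cB e2) (q₂.cA e3)).cA e1.symm).cB e4,
      by simp [csize, hs₁, hs₂], by simp only [mu, mu_cA, mu_cB]; omega⟩
  | @impR B₁ D₁ Γ₀ Δ p ih =>
    intro σ
    obtain ⟨q, hs, hm⟩ := ih σ
    have e1 : mrn σ (B₁ ::ₘ Γ₀) = B₁.rn σ ::ₘ mrn σ Γ₀ := by simp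
    have e2 : mrn σ (D₁ ::ₘ Δ) = D₁.rn σ ::ₘ mrn σ Δ := by simp
    have e3 : ((B₁.rn σ).imp (D₁.rn σ)) ::ₘ mrn σ Δ = mrn σ ((B₁.imp D₁) ::ₘ Δ) := by
      simp [Fm.rn]
    refine ⟨(impR ((q.cA e1).cB e2)).cB e3, by simp [csize, hs], ?_⟩
    simp only [mu, mu_cA, mu_cB]
    have hcond : IProv (B₁ ::ₘ Γ₀) D₁ → IProv (B₁.rn σ ::ₘ mrn σ Γ₀) (D₁.rn σ) := by
      intro h
      have := h.rn σ; rwa [mrn_cons] at this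
    by_cases h : IProv (B₁ ::ₘ Γ₀) D₁
    · rw [if_pos h, if_pos (hcond h)]; omega
    · rw [if_neg h]
      split <;> omega
  | @allL B₁ Γ₀ Δ t p ih =>
    intro σ
    obtain ⟨q, hs, hm⟩ := ih σ
    have e1 : mrn σ ((B₁.inst t) ::ₘ (Fm.all B₁) ::ₘ Γ₀)
        = ((B₁.rn σ).inst (t.rn σ)) ::ₘ (Fm.all (B₁.rn σ)) ::ₘ mrn σ Γ₀ := by
      simp [Fm.rn, Fm.rn_inst]
    have e2 : (Fm.all (B₁.rn σ)) ::ₘ mrn σ Γ₀ = mrn σ ((Fm.all B₁) ::ₘ Γ₀) := by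
      simp [Fm.rn]
    exact ⟨(allL (t.rn σ) (q.cA e1)).cA e2, by simp [csize, hs], by simpa [mu] using hm⟩
  | @exR B₁ Γ₀ Δ t p ih =>
    intro σ
    obtain ⟨q, hs, hm⟩ := ih σ
    have e1 : mrn σ ((B₁.inst t) ::ₘ Δ) = ((B₁.rn σ).inst (t.rn σ)) ::ₘ mrn σ Δ := by
      simp [Fm.rn_inst]
    have e2 : (Fm.ex (B₁.rn σ)) ::ₘ mrn σ Δ = mrn σ ((Fm.ex B₁) ::ₘ Δ) := by
      simp [Fm.rn]
    exact ⟨(exR (t.rn σ) (q.cB e1)).cB e2, by simp [csize, hs], by simpa [mu] using hm⟩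
  | @exL B₁ Γ₀ Δ c hc p ih =>
    intro σ
    set c' := msBnd (mrn σ (Fm.ex B₁ ::ₘ Γ₀)) + msBnd (mrn σ Δ) with hc'def
    have hcB : ¬ (Fm.ex B₁).constIn c := hc.1 _ (Multiset.mem_cons_self _ _)
    have hcΓ : ∀ F ∈ Γ₀, ¬ F.constIn c := fun F hF => hc.1 F (Multiset.mem_cons_of_mem hF)
    obtain ⟨q, hs, hm⟩ := ih (Function.update σ c c')
    have e1 : mrn (Function.update σ c c') (B₁.inst (Tm.const c) ::ₘ Γ₀)
        = (B₁.rn σ).inst (Tm.const c') ::ₘ mrn σ Γ₀ := by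
      rw [mrn_cons, mrn_update_of_fresh hcΓ, rn_inst_const, Function.update_self,
        rn_update_of_fresh (show ¬ Fm.constIn c B₁ from hcB)]
    have e2 : mrn (Function.update σ c c') Δ = mrn σ Δ := mrn_update_of_fresh hc.2
    have hfr : FreshSeq c' (Fm.ex (B₁.rn σ) ::ₘ mrn σ Γ₀) (mrn σ Δ) := by
      have e3 : (Fm.ex (B₁.rn σ) ::ₘ mrn σ Γ₀) = mrn σ (Fm.ex B₁ ::ₘ Γ₀) := by
        simp [Fm.rn]
      rw [e3]
      exact freshSeq_of_le (by omega) (by omega)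
    have e4 : (Fm.ex (B₁.rn σ)) ::ₘ mrn σ Γ₀ = mrn σ ((Fm.ex B₁) ::ₘ Γ₀) := by
      simp [Fm.rn]
    exact ⟨(exL c' hfr ((q.cA e1).cB e2)).cA e4, by simp [csize, hs],
      by simpa [mu] using hm⟩
  | @allR B₁ Γ₀ Δ c hc p ih =>
    intro σ
    set c' := msBnd (mrn σ Γ₀) + msBnd (mrn σ (Fm.all B₁ ::ₘ Δ)) with hc'def
    have hcB : ¬ (Fm.all B₁).constIn c := hc.2 _ (Multiset.mem_cons_self _ _)
    have hcΔ : ∀ F ∈ Δ, ¬ F.constIn c := fun F hF => hc.2 F (Multiset.mem_cons_of_mem hF)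
    obtain ⟨q, hs, hm⟩ := ih (Function.update σ c c')
    have e1 : mrn (Function.update σ c c') Γ₀ = mrn σ Γ₀ := mrn_update_of_fresh hc.1
    have e2 : mrn (Function.update σ c c') (B₁.inst (Tm.const c) ::ₘ Δ)
        = (B₁.rn σ).inst (Tm.const c') ::ₘ mrn σ Δ := by
      rw [mrn_cons, mrn_update_of_fresh hcΔ, rn_inst_const, Function.update_self,
        rn_update_of_fresh (show ¬ Fm.constIn c B₁ from hcB)]
    have hfr : FreshSeq c' (mrn σ Γ₀) (Fm.all (B₁.rn σ) ::ₘ mrn σ Δ) := by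
      have e3 : (Fm.all (B₁.rn σ) ::ₘ mrn σ Δ) = mrn σ (Fm.all B₁ ::ₘ Δ) := by
        simp [Fm.rn]
      rw [e3]
      exact freshSeq_of_le (by omega) (by omega)
    have e4 : (Fm.all (B₁.rn σ)) ::ₘ mrn σ Δ = mrn σ ((Fm.all B₁) ::ₘ Δ) := by
      simp [Fm.rn]
    exact ⟨(allR c' hfr ((q.cA e1).cB e2)).cB e4, by simp [csize, hs],
      by simpa [mu] using hm⟩

end CProof

@[simp] theorem msBnd_cons (F : Fm) (Γ : Multiset Fm) :
    msBnd (F ::ₘ Γ) = F.bnd + msBnd Γ := by simp [msBnd]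

@[simp] theorem msBnd_add (Γ Δ : Multiset Fm) :
    msBnd (Γ + Δ) = msBnd Γ + msBnd Δ := by simp [msBnd]

@[simp] theorem mrn_id (Γ : Multiset Fm) : mrn id Γ = Γ := by
  simp [mrn, Multiset.map_congr rfl (fun F _ => Fm.rn_id F)]

namespace CProof

theorem one_le_csize {Γ Δ : Multiset Fm} (p : CProof Γ Δ) : 1 ≤ p.csize := by
  cases p <;> simp [csize]

theorem weakenR : ∀ (n : ℕ) {Γ Δ : Multiset Fm} (p : CProof Γ Δ), p.csize ≤ n →
    ∀ (E : Multiset Fm), ∃ p' : CProof Γ (Δ + E), p'.mu ≤ p.mu := by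
  intro n
  induction n with
  | zero =>
    intro Γ Δ p hn E
    exact absurd (le_trans (one_le_csize p) hn) (by omega)
  | succ n ih =>
    intro Γ Δ p hn E
    cases p with
    | ax h =>
      have h' : AxSeq Γ (Δ + E) := by
        rcases h with h | ⟨A, hA, h1, h2⟩
        · exact Or.inl (Multiset.mem_add.2 (Or.inl h))
        · exact Or.inr ⟨A, hA, h1, Multiset.mem_add.2 (Or.inl h2)⟩
      exact ⟨ax h', by simp [mu]⟩
    | @contrL B₁ Γ₀ Δ p =>
      obtain ⟨q, hm⟩ := ih p (by simp [csize] at hn; omega) E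
      exact ⟨contrL q, by simpa [mu] using hm⟩
    | @contrR B₁ Γ₀ Δ₀ p =>
      obtain ⟨q, hm⟩ := ih p (by simp [csize] at hn; omega) E
      have e1 : (B₁ ::ₘ B₁ ::ₘ Δ₀) + E = B₁ ::ₘ B₁ ::ₘ (Δ₀ + E) := by
        simp [Multiset.cons_add]
      have e2 : B₁ ::ₘ (Δ₀ + E) = (B₁ ::ₘ Δ₀) + E := by simp [Multiset.cons_add]
      exact ⟨(contrR (q.cB e1)).cB e2, by simpa [mu] using hm⟩
    | @botR D₁ Γ₀ Δ₀ p =>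
      obtain ⟨q, hm⟩ := ih p (by simp [csize] at hn; omega) E
      have e1 : (Fm.bot ::ₘ Δ₀) + E = Fm.bot ::ₘ (Δ₀ + E) := by simp [Multiset.cons_add]
      have e2 : D₁ ::ₘ (Δ₀ + E) = (D₁ ::ₘ Δ₀) + E := by simp [Multiset.cons_add]
      exact ⟨(botR (q.cB e1)).cB e2, by simpa [mu] using hm⟩
    | @andL B₁ D₁ Γ₀ Δ p =>
      obtain ⟨q, hm⟩ := ih p (by simp [csize] at hn; omega) E
      exact ⟨andL q, by simpa [mu] using hm⟩
    | @andR B₁ D₁ Γ₀ Δ₀ p q =>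
      obtain ⟨q₁, hm₁⟩ := ih p (by simp [csize] at hn; omega) E
      obtain ⟨q₂, hm₂⟩ := ih q (by simp [csize] at hn; omega) E
      have e1 : (B₁ ::ₘ Δ₀) + E = B₁ ::ₘ (Δ₀ + E) := by simp [Multiset.cons_add]
      have e2 : (D₁ ::ₘ Δ₀) + E = D₁ ::ₘ (Δ₀ + E) := by simp [Multiset.cons_add]
      have e3 : (B₁.conj D₁) ::ₘ (Δ₀ + E) = ((B₁.conj D₁) ::ₘ Δ₀) + E := by
        simp [Multiset.cons_add]
      exact ⟨(andR (q₁.cB e1) (q₂.cB e2)).cB e3, by simp only [mu, mu_cB]; omega⟩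
    | @orL B₁ D₁ Γ₀ Δ p q =>
      obtain ⟨q₁, hm₁⟩ := ih p (by simp [csize] at hn; omega) E
      obtain ⟨q₂, hm₂⟩ := ih q (by simp [csize] at hn; omega) E
      refine ⟨orL q₁ q₂, ?_⟩
      simp only [mu]
      by_cases h : ∃ F ∈ Δ, IProv (B₁ ::ₘ Γ₀) F ∧ IProv (D₁ ::ₘ Γ₀) F
      · have h' : ∃ F ∈ Δ + E, IProv (B₁ ::ₘ Γ₀) F ∧ IProv (D₁ ::ₘ Γ₀) F := by
          obtain ⟨F, hF, h1, h2⟩ := h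
          exact ⟨F, Multiset.mem_add.2 (Or.inl hF), h1, h2⟩
        rw [if_pos h, if_pos h']; omega
      · rw [if_neg h]; split <;> omega
    | @orR1 B₁ D₁ Γ₀ Δ₀ p =>
      obtain ⟨q, hm⟩ := ih p (by simp [csize] at hn; omega) E
      have e1 : (B₁ ::ₘ Δ₀) + E = B₁ ::ₘ (Δ₀ + E) := by simp [Multiset.cons_add]
      have e2 : (B₁.disj D₁) ::ₘ (Δ₀ + E) = ((B₁.disj D₁) ::ₘ Δ₀) + E := by
        simp [Multiset.cons_add]
      exact ⟨(orR1 (q.cB e1)).cB e2, by simpa [mu] using hm⟩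
    | @orR2 B₁ D₁ Γ₀ Δ₀ p =>
      obtain ⟨q, hm⟩ := ih p (by simp [csize] at hn; omega) E
      have e1 : (D₁ ::ₘ Δ₀) + E = D₁ ::ₘ (Δ₀ + E) := by simp [Multiset.cons_add]
      have e2 : (B₁.disj D₁) ::ₘ (Δ₀ + E) = ((B₁.disj D₁) ::ₘ Δ₀) + E := by
        simp [Multiset.cons_add]
      exact ⟨(orR2 (q.cB e1)).cB e2, by simpa [mu] using hm⟩
    | @impL B₁ D₁ Γ₀ Δ' Θ p q =>
      obtain ⟨q₁, hm₁⟩ := ih p (by simp [csize] at hn; omega) E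
      obtain ⟨q₂, hm₂⟩ := ih q (by simp [csize] at hn; omega) 0
      have e1 : (B₁ ::ₘ Δ') + E = B₁ ::ₘ (Δ' + E) := by simp [Multiset.cons_add]
      have e2 : Θ + 0 = Θ := by simp
      have e3 : (Δ' + E) + Θ = (Δ' + Θ) + E := by
        rw [add_right_comm]
      exact ⟨((impL (q₁.cB e1) (q₂.cB e2)).cB e3), by simp only [mu, mu_cB]; omega⟩
    | @impR B₁ D₁ Γ₀ Δ₀ p =>
      obtain ⟨q, hm⟩ := ih p (by simp [csize] at hn; omega) E
      have e1 : (D₁ ::ₘ Δ₀) + E = D₁ ::ₘ (Δ₀ + E) := by simp [Multiset.cons_add]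
      have e2 : (B₁.imp D₁) ::ₘ (Δ₀ + E) = ((B₁.imp D₁) ::ₘ Δ₀) + E := by
        simp [Multiset.cons_add]
      refine ⟨(impR (q.cB e1)).cB e2, ?_⟩
      simp only [mu, mu_cB]
      omega
    | @allL B₁ Γ₀ Δ t p =>
      obtain ⟨q, hm⟩ := ih p (by simp [csize] at hn; omega) E
      exact ⟨allL t q, by simpa [mu] using hm⟩
    | @exR B₁ Γ₀ Δ₀ t p =>
      obtain ⟨q, hm⟩ := ih p (by simp [csize] at hn; omega) E
      have e1 : ((B₁.inst t) ::ₘ Δ₀) + E = (B₁.inst t) ::ₘ (Δ₀ + E) := by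
        simp [Multiset.cons_add]
      have e2 : (Fm.ex B₁) ::ₘ (Δ₀ + E) = ((Fm.ex B₁) ::ₘ Δ₀) + E := by
        simp [Multiset.cons_add]
      exact ⟨(exR t (q.cB e1)).cB e2, by simpa [mu] using hm⟩
    | @exL B₁ Γ₀ Δ c hc p =>
      set c' := msBnd (Fm.ex B₁ ::ₘ Γ₀) + msBnd Δ + msBnd E with hc'def
      have hcB : ¬ (Fm.ex B₁).constIn c := hc.1 _ (Multiset.mem_cons_self _ _)
      have hcΓ : ∀ F ∈ Γ₀, ¬ F.constIn c := fun F hF => hc.1 F (Multiset.mem_cons_of_mem hF)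
      obtain ⟨q, hqs, hqm⟩ := rn_mu p (Function.update id c c')
      have e1 : mrn (Function.update id c c') (B₁.inst (Tm.const c) ::ₘ Γ₀)
          = B₁.inst (Tm.const c') ::ₘ Γ₀ := by
        rw [mrn_cons, mrn_update_of_fresh hcΓ, rn_inst_const, Function.update_self,
          rn_update_of_fresh (show ¬ Fm.constIn c B₁ from hcB), Fm.rn_id, mrn_id]
      have e2 : mrn (Function.update id c c') Δ = Δ := by
        rw [mrn_update_of_fresh hc.2, mrn_id]
      obtain ⟨q', hm'⟩ := ih ((q.cA e1).cB e2) (by simp [csize] at hn ⊢; omega) E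
      have hfr : FreshSeq c' (Fm.ex B₁ ::ₘ Γ₀) (Δ + E) :=
        freshSeq_of_le (by omega) (by simp; omega)
      refine ⟨exL c' hfr q', ?_⟩
      calc (exL c' hfr q').mu = q'.mu := rfl
        _ ≤ ((q.cA e1).cB e2).mu := hm'
        _ ≤ p.mu := by simpa using hqm
        _ = (exL c hc p).mu := rfl
    | @allR B₁ Γ Δ₀ c hc p =>
      set c' := msBnd Γ + msBnd (Fm.all B₁ ::ₘ Δ₀) + msBnd E with hc'def
      have hcB : ¬ (Fm.all B₁).constIn c := hc.2 _ (Multiset.mem_cons_self _ _)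
      have hcΔ : ∀ F ∈ Δ₀, ¬ F.constIn c := fun F hF => hc.2 F (Multiset.mem_cons_of_mem hF)
      obtain ⟨q, hqs, hqm⟩ := rn_mu p (Function.update id c c')
      have e1 : mrn (Function.update id c c') Γ = Γ := by
        rw [mrn_update_of_fresh hc.1, mrn_id]
      have e2 : mrn (Function.update id c c') (B₁.inst (Tm.const c) ::ₘ Δ₀)
          = B₁.inst (Tm.const c') ::ₘ Δ₀ := by
        rw [mrn_cons, mrn_update_of_fresh hcΔ, rn_inst_const, Function.update_self,
          rn_update_of_fresh (show ¬ Fm.constIn c B₁ from hcB), Fm.rn_id, mrn_id]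
      obtain ⟨q', hm'⟩ := ih ((q.cA e1).cB e2) (by simp [csize] at hn ⊢; omega) E
      have e3 : (B₁.inst (Tm.const c') ::ₘ Δ₀) + E = B₁.inst (Tm.const c') ::ₘ (Δ₀ + E) := by
        simp [Multiset.cons_add]
      have e4 : (Fm.all B₁) ::ₘ (Δ₀ + E) = ((Fm.all B₁) ::ₘ Δ₀) + E := by
        simp [Multiset.cons_add]
      have hfr : FreshSeq c' Γ ((Fm.all B₁) ::ₘ (Δ₀ + E)) :=
        freshSeq_of_le (by omega) (by simp at *; omega)
      refine ⟨(allR c' hfr (q'.cB e3)).cB e4, ?_⟩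
      calc ((allR c' hfr (q'.cB e3)).cB e4).mu = q'.mu := by simp [mu]
        _ ≤ ((q.cA e1).cB e2).mu := hm'
        _ ≤ p.mu := by simpa using hqm
        _ = (allR c hc p).mu := rfl

end CProof

theorem msge_mem {Γ₁ Γ : Multiset Fm} {A : Fm} (hm : MsGe Γ₁ Γ) (hA : A ∈ Γ) :
    ∃ F ∈ Γ₁, Fm.ge F A := by
  rw [← Multiset.cons_erase hA] at hm
  obtain ⟨F, h1, h2, _⟩ := msge_cons_inv hm
  exact ⟨F, h1, h2⟩

namespace CProof

theorem isI_card {Γ Δ : Multiset Fm} (p : CProof Γ Δ) (h : p.isI) :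
    Multiset.card Δ = 1 := by
  cases p <;> first | exact h | exact h.1

theorem strengthenI : ∀ (n : ℕ) {Γ Δ : Multiset Fm} (p : CProof Γ Δ), p.csize ≤ n →
    p.isI → ∀ {Γ₁ : Multiset Fm}, MsGe Γ₁ Γ → ∃ p' : CProof Γ₁ Δ, p'.isI := by
  intro n
  induction n with
  | zero =>
    intro Γ Δ p hn
    exact absurd (le_trans (one_le_csize p) hn) (by omega)
  | succ n ih =>
    intro Γ Δ p hn hI Γ₁ hm
    cases p with
    | ax h =>
      rcases h with h | ⟨A, hA, h1, h2⟩
      · exact ⟨ax (Or.inl h), hI⟩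
      · obtain ⟨F, hF, hge⟩ := msge_mem hm h1
        rcases ge_eq_of_atom hge hA with rfl
        exact ⟨ax (Or.inr ⟨F, hA, hF, h2⟩), hI⟩
    | @contrL B₁ Γ₀ Δ p =>
      obtain ⟨F, hF, hge, hmE⟩ := msge_cons_inv hm
      obtain ⟨r, hr⟩ := ih p (by simp [csize] at hn; omega) hI.2 (msge_cons hge hm)
      have e1 : F ::ₘ Γ₁ = F ::ₘ F ::ₘ Γ₁.erase F := by
        rw [Multiset.cons_erase hF]
      have e2 : F ::ₘ Γ₁.erase F = Γ₁ := Multiset.cons_erase hF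
      refine ⟨(contrL (r.cA e1)).cA e2, ?_⟩
      exact (isI_cA _ _).2 ⟨hI.1, (isI_cA _ _).2 hr⟩
    | @contrR B₁ Γ₀ Δ₀ p =>
      obtain ⟨r, hr⟩ := ih p (by simp [csize] at hn; omega) hI.2 hm
      exact ⟨contrR r, ⟨hI.1, hr⟩⟩
    | @botR D₁ Γ₀ Δ₀ p =>
      obtain ⟨r, hr⟩ := ih p (by simp [csize] at hn; omega) hI.2 hm
      exact ⟨botR r, ⟨hI.1, hr⟩⟩
    | @andL B₁ D₁ Γ₀ Δ p =>
      obtain ⟨F, hF, hge, hmE⟩ := msge_cons_inv hm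
      rcases ge_conj_eq hge with rfl
      obtain ⟨r, hr⟩ := ih p (by simp [csize] at hn; omega) hI.2
        (msge_cons_self (msge_cons_self hm))
      have e1 : B₁ ::ₘ D₁ ::ₘ Γ₁ = B₁ ::ₘ D₁ ::ₘ (B₁.conj D₁) ::ₘ Γ₁.erase (B₁.conj D₁) := by
        rw [Multiset.cons_erase hF]
      have e2 : (B₁.conj D₁) ::ₘ Γ₁.erase (B₁.conj D₁) = Γ₁ := Multiset.cons_erase hF
      refine ⟨(andL (r.cA e1)).cA e2, ?_⟩
      exact (isI_cA _ _).2 ⟨hI.1, (isI_cA _ _).2 hr⟩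
    | @andR B₁ D₁ Γ₀ Δ₀ p q =>
      obtain ⟨r₁, hr₁⟩ := ih p (by simp [csize] at hn; omega) hI.2.1 hm
      obtain ⟨r₂, hr₂⟩ := ih q (by simp [csize] at hn; omega) hI.2.2 hm
      exact ⟨andR r₁ r₂, ⟨hI.1, hr₁, hr₂⟩⟩
    | @orL B₁ D₁ Γ₀ Δ p q =>
      obtain ⟨F, hF, hge, hmE⟩ := msge_cons_inv hm
      rcases ge_disj_inv hge with rfl | hge' | hge'
      · obtain ⟨r₁, hr₁⟩ := ih p (by simp [csize] at hn; omega) hI.2.1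
          (msge_cons_self hmE)
        obtain ⟨r₂, hr₂⟩ := ih q (by simp [csize] at hn; omega) hI.2.2
          (msge_cons_self hmE)
        have e2 : (B₁.disj D₁) ::ₘ Γ₁.erase (B₁.disj D₁) = Γ₁ := Multiset.cons_erase hF
        exact ⟨(orL r₁ r₂).cA e2, (isI_cA _ _).2 ⟨hI.1, hr₁, hr₂⟩⟩
      · have hm' : MsGe Γ₁ (B₁ ::ₘ Γ₀) := by
          rw [← Multiset.cons_erase hF]
          exact msge_cons hge' hmE
        exact ih p (by simp [csize] at hn; omega) hI.2.1 hm'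
      · have hm' : MsGe Γ₁ (D₁ ::ₘ Γ₀) := by
          rw [← Multiset.cons_erase hF]
          exact msge_cons hge' hmE
        exact ih q (by simp [csize] at hn; omega) hI.2.2 hm'
    | @orR1 B₁ D₁ Γ₀ Δ₀ p =>
      obtain ⟨r, hr⟩ := ih p (by simp [csize] at hn; omega) hI.2 hm
      exact ⟨orR1 r, ⟨hI.1, hr⟩⟩
    | @orR2 B₁ D₁ Γ₀ Δ₀ p =>
      obtain ⟨r, hr⟩ := ih p (by simp [csize] at hn; omega) hI.2 hm
      exact ⟨orR2 r, ⟨hI.1, hr⟩⟩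
    | @impL B₁ D₁ Γ₀ Δ' Θ p q =>
      obtain ⟨F, hF, hge, hmE⟩ := msge_cons_inv hm
      rcases ge_imp_inv hge with rfl | hge'
      · obtain ⟨r₁, hr₁⟩ := ih p (by simp [csize] at hn; omega) hI.2.1 hm
        obtain ⟨r₂, hr₂⟩ := ih q (by simp [csize] at hn; omega) hI.2.2
          (msge_cons_self hmE)
        have e1 : Γ₁ = (B₁.imp D₁) ::ₘ Γ₁.erase (B₁.imp D₁) :=
          (Multiset.cons_erase hF).symm
        exact ⟨(impL (r₁.cA e1) r₂).cA e1.symm, (isI_cA _ _).2 ⟨hI.1, (isI_cA _ _).2 hr₁, hr₂⟩⟩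
      · have hΔ' : Δ' = 0 := by
          have h1 := isI_card q hI.2.2
          have h2 := hI.1
          rw [Multiset.card_add] at h2
          rw [h1] at h2
          exact Multiset.card_eq_zero.1 (by omega)
        subst hΔ'
        have hm' : MsGe Γ₁ (D₁ ::ₘ Γ₀) := by
          rw [← Multiset.cons_erase hF]
          exact msge_cons hge' hmE
        obtain ⟨r, hr⟩ := ih q (by simp [csize] at hn; omega) hI.2.2 hm'
        exact ⟨r.cB (by rw [zero_add]), (isI_cB _ _).2 hr⟩
    | @impR B₁ D₁ Γ₀ Δ₀ p =>
      obtain ⟨r, hr⟩ := ih p (by simp [csize] at hn; omega) hI.2 (msge_cons_self hm)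
      exact ⟨impR r, ⟨hI.1, hr⟩⟩
    | @allL B₁ Γ₀ Δ t p =>
      obtain ⟨F, hF, hge, hmE⟩ := msge_cons_inv hm
      rcases ge_all_eq hge with rfl
      obtain ⟨r, hr⟩ := ih p (by simp [csize] at hn; omega) hI.2 (msge_cons_self hm)
      have e1 : (B₁.inst t) ::ₘ Γ₁
          = (B₁.inst t) ::ₘ (Fm.all B₁) ::ₘ Γ₁.erase (Fm.all B₁) := by
        rw [Multiset.cons_erase hF]
      have e2 : (Fm.all B₁) ::ₘ Γ₁.erase (Fm.all B₁) = Γ₁ := Multiset.cons_erase hF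
      refine ⟨(allL t (r.cA e1)).cA e2, ?_⟩
      exact (isI_cA _ _).2 ⟨hI.1, (isI_cA _ _).2 hr⟩
    | @exR B₁ Γ₀ Δ₀ t p =>
      obtain ⟨r, hr⟩ := ih p (by simp [csize] at hn; omega) hI.2 hm
      exact ⟨exR t r, ⟨hI.1, hr⟩⟩
    | @exL B₁ Γ₀ Δ c hc p =>
      obtain ⟨F, hF, hge, hmE⟩ := msge_cons_inv hm
      have hcB : ¬ (Fm.ex B₁).constIn c := hc.1 _ (Multiset.mem_cons_self _ _)
      have hcΓ : ∀ G ∈ Γ₀, ¬ G.constIn c := fun G hG => hc.1 G (Multiset.mem_cons_of_mem hG)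
      rcases ge_ex_inv hge with rfl | ⟨c'', hge'⟩
      · set c' := msBnd Γ₁ + msBnd Δ with hc'def
        obtain ⟨q, hqs, hqi⟩ := rn_isI p (Function.update id c c')
        have e1 : mrn (Function.update id c c') (B₁.inst (Tm.const c) ::ₘ Γ₀)
            = B₁.inst (Tm.const c') ::ₘ Γ₀ := by
          rw [mrn_cons, mrn_update_of_fresh hcΓ, rn_inst_const, Function.update_self,
            rn_update_of_fresh (show ¬ Fm.constIn c B₁ from hcB), Fm.rn_id, mrn_id]
        have e2 : mrn (Function.update id c c') Δ = Δ := by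
          rw [mrn_update_of_fresh hc.2, mrn_id]
        obtain ⟨r, hr⟩ := ih ((q.cA e1).cB e2) (by simp [csize] at hn ⊢; omega)
          ((isI_cB _ _).2 ((isI_cA _ _).2 (hqi hI.2)))
          (msge_cons_self (Γ₁ := Γ₁.erase (Fm.ex B₁)) hmE)
        have hfr : FreshSeq c' ((Fm.ex B₁) ::ₘ Γ₁.erase (Fm.ex B₁)) Δ := by
          rw [Multiset.cons_erase hF]
          exact freshSeq_of_le (by omega) (by omega)
        have e3 : (Fm.ex B₁) ::ₘ Γ₁.erase (Fm.ex B₁) = Γ₁ := Multiset.cons_erase hF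
        exact ⟨(exL c' hfr r).cA e3, (isI_cA _ _).2 ⟨hI.1, hr⟩⟩
      · obtain ⟨q, hqs, hqi⟩ := rn_isI p (Function.update id c c'')
        have e1 : mrn (Function.update id c c'') (B₁.inst (Tm.const c) ::ₘ Γ₀)
            = B₁.inst (Tm.const c'') ::ₘ Γ₀ := by
          rw [mrn_cons, mrn_update_of_fresh hcΓ, rn_inst_const, Function.update_self,
            rn_update_of_fresh (show ¬ Fm.constIn c B₁ from hcB), Fm.rn_id, mrn_id]
        have e2 : mrn (Function.update id c c'') Δ = Δ := by
          rw [mrn_update_of_fresh hc.2, mrn_id]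
        have hm' : MsGe Γ₁ (B₁.inst (Tm.const c'') ::ₘ Γ₀) := by
          rw [← Multiset.cons_erase hF]
          exact msge_cons hge' hmE
        exact ih ((q.cA e1).cB e2) (by simp [csize] at hn ⊢; omega)
          ((isI_cB _ _).2 ((isI_cA _ _).2 (hqi hI.2))) hm'
    | @allR B₁ Γ Δ₀ c hc p =>
      set c' := msBnd Γ₁ + msBnd ((Fm.all B₁) ::ₘ Δ₀) with hc'def
      have hcB : ¬ (Fm.all B₁).constIn c := hc.2 _ (Multiset.mem_cons_self _ _)
      have hcΔ : ∀ G ∈ Δ₀, ¬ G.constIn c := fun G hG => hc.2 G (Multiset.mem_cons_of_mem hG)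
      obtain ⟨q, hqs, hqi⟩ := rn_isI p (Function.update id c c')
      have e1 : mrn (Function.update id c c') Γ = Γ := by
        rw [mrn_update_of_fresh hc.1, mrn_id]
      have e2 : mrn (Function.update id c c') (B₁.inst (Tm.const c) ::ₘ Δ₀)
          = B₁.inst (Tm.const c') ::ₘ Δ₀ := by
        rw [mrn_cons, mrn_update_of_fresh hcΔ, rn_inst_const, Function.update_self,
          rn_update_of_fresh (show ¬ Fm.constIn c B₁ from hcB), Fm.rn_id, mrn_id]
      obtain ⟨r, hr⟩ := ih ((q.cA e1).cB e2) (by simp [csize] at hn ⊢; omega)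
        ((isI_cB _ _).2 ((isI_cA _ _).2 (hqi hI.2))) hm
      have hfr : FreshSeq c' Γ₁ ((Fm.all B₁) ::ₘ Δ₀) :=
        freshSeq_of_le (by omega) (by omega)
      exact ⟨allR c' hfr r, ⟨hI.1, hr⟩⟩

end CProof

/-- `MsGe`-monotonicity of intuitionistic provability. -/
theorem IProv.mono {Γ₁ Γ₂ : Multiset Fm} {F : Fm} (hm : MsGe Γ₁ Γ₂) (h : IProv Γ₂ F) :
    IProv Γ₁ F := by
  obtain ⟨p, hp⟩ := h
  obtain ⟨p', hp'⟩ := CProof.strengthenI p.csize p (le_refl _) hp hm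
  exact ⟨p', hp'⟩

namespace CProof

theorem strengthenC : ∀ (n : ℕ) {Γ Δ : Multiset Fm} (p : CProof Γ Δ), p.csize ≤ n →
    ∀ {Γ₁ : Multiset Fm}, MsGe Γ₁ Γ → ∃ p' : CProof Γ₁ Δ, p'.mu ≤ p.mu := by
  intro n
  induction n with
  | zero =>
    intro Γ Δ p hn
    exact absurd (le_trans (one_le_csize p) hn) (by omega)
  | succ n ih =>
    intro Γ Δ p hn Γ₁ hm
    cases p with
    | ax h =>
      rcases h with h | ⟨A, hA, h1, h2⟩
      · exact ⟨ax (Or.inl h), by simp [mu]⟩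
      · obtain ⟨F, hF, hge⟩ := msge_mem hm h1
        rcases ge_eq_of_atom hge hA with rfl
        exact ⟨ax (Or.inr ⟨F, hA, hF, h2⟩), by simp [mu]⟩
    | @contrL B₁ Γ₀ Δ p =>
      obtain ⟨F, hF, hge, hmE⟩ := msge_cons_inv hm
      obtain ⟨r, hr⟩ := ih p (by simp [csize] at hn; omega) (msge_cons hge hm)
      have e1 : F ::ₘ Γ₁ = F ::ₘ F ::ₘ Γ₁.erase F := by
        rw [Multiset.cons_erase hF]
      have e2 : F ::ₘ Γ₁.erase F = Γ₁ := Multiset.cons_erase hF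
      exact ⟨(contrL (r.cA e1)).cA e2, by simpa [mu] using hr⟩
    | @contrR B₁ Γ₀ Δ₀ p =>
      obtain ⟨r, hr⟩ := ih p (by simp [csize] at hn; omega) hm
      exact ⟨contrR r, by simpa [mu] using hr⟩
    | @botR D₁ Γ₀ Δ₀ p =>
      obtain ⟨r, hr⟩ := ih p (by simp [csize] at hn; omega) hm
      exact ⟨botR r, by simpa [mu] using hr⟩
    | @andL B₁ D₁ Γ₀ Δ p =>
      obtain ⟨F, hF, hge, hmE⟩ := msge_cons_inv hm
      rcases ge_conj_eq hge with rfl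
      obtain ⟨r, hr⟩ := ih p (by simp [csize] at hn; omega)
        (msge_cons_self (msge_cons_self hm))
      have e1 : B₁ ::ₘ D₁ ::ₘ Γ₁ = B₁ ::ₘ D₁ ::ₘ (B₁.conj D₁) ::ₘ Γ₁.erase (B₁.conj D₁) := by
        rw [Multiset.cons_erase hF]
      have e2 : (B₁.conj D₁) ::ₘ Γ₁.erase (B₁.conj D₁) = Γ₁ := Multiset.cons_erase hF
      exact ⟨(andL (r.cA e1)).cA e2, by simpa [mu] using hr⟩
    | @andR B₁ D₁ Γ₀ Δ₀ p q =>
      obtain ⟨r₁, hr₁⟩ := ih p (by simp [csize] at hn; omega) hm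
      obtain ⟨r₂, hr₂⟩ := ih q (by simp [csize] at hn; omega) hm
      exact ⟨andR r₁ r₂, by simp only [mu]; omega⟩
    | @orL B₁ D₁ Γ₀ Δ p q =>
      obtain ⟨F, hF, hge, hmE⟩ := msge_cons_inv hm
      rcases ge_disj_inv hge with rfl | hge' | hge'
      · obtain ⟨r₁, hr₁⟩ := ih p (by simp [csize] at hn; omega) (msge_cons_self hmE)
        obtain ⟨r₂, hr₂⟩ := ih q (by simp [csize] at hn; omega) (msge_cons_self hmE)
        have e2 : (B₁.disj D₁) ::ₘ Γ₁.erase (B₁.disj D₁) = Γ₁ := Multiset.cons_erase hF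
        refine ⟨(orL r₁ r₂).cA e2, ?_⟩
        simp only [mu, mu_cA]
        by_cases h : ∃ F ∈ Δ, IProv (B₁ ::ₘ Γ₀) F ∧ IProv (D₁ ::ₘ Γ₀) F
        · have h' : ∃ F' ∈ Δ, IProv (B₁ ::ₘ Γ₁.erase (B₁.disj D₁)) F' ∧
              IProv (D₁ ::ₘ Γ₁.erase (B₁.disj D₁)) F' := by
            obtain ⟨F', hF', h1, h2⟩ := h
            exact ⟨F', hF', h1.mono (msge_cons_self hmE), h2.mono (msge_cons_self hmE)⟩
          rw [if_pos h, if_pos h']; omega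
        · rw [if_neg h]; split <;> omega
      · have hm' : MsGe Γ₁ (B₁ ::ₘ Γ₀) := by
          rw [← Multiset.cons_erase hF]
          exact msge_cons hge' hmE
        obtain ⟨r, hr⟩ := ih p (by simp [csize] at hn; omega) hm'
        refine ⟨r, le_trans hr ?_⟩
        simp only [mu]; omega
      · have hm' : MsGe Γ₁ (D₁ ::ₘ Γ₀) := by
          rw [← Multiset.cons_erase hF]
          exact msge_cons hge' hmE
        obtain ⟨r, hr⟩ := ih q (by simp [csize] at hn; omega) hm'
        refine ⟨r, le_trans hr ?_⟩
        simp only [mu]; omega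
    | @orR1 B₁ D₁ Γ₀ Δ₀ p =>
      obtain ⟨r, hr⟩ := ih p (by simp [csize] at hn; omega) hm
      exact ⟨orR1 r, by simpa [mu] using hr⟩
    | @orR2 B₁ D₁ Γ₀ Δ₀ p =>
      obtain ⟨r, hr⟩ := ih p (by simp [csize] at hn; omega) hm
      exact ⟨orR2 r, by simpa [mu] using hr⟩
    | @impL B₁ D₁ Γ₀ Δ' Θ p q =>
      obtain ⟨F, hF, hge, hmE⟩ := msge_cons_inv hm
      rcases ge_imp_inv hge with rfl | hge'
      · obtain ⟨r₁, hr₁⟩ := ih p (by simp [csize] at hn; omega) hm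
        obtain ⟨r₂, hr₂⟩ := ih q (by simp [csize] at hn; omega) (msge_cons_self hmE)
        have e1 : Γ₁ = (B₁.imp D₁) ::ₘ Γ₁.erase (B₁.imp D₁) :=
          (Multiset.cons_erase hF).symm
        exact ⟨(impL (r₁.cA e1) r₂).cA e1.symm, by simp only [mu, mu_cA]; omega⟩
      · have hm' : MsGe Γ₁ (D₁ ::ₘ Γ₀) := by
          rw [← Multiset.cons_erase hF]
          exact msge_cons hge' hmE
        obtain ⟨r, hr⟩ := ih q (by simp [csize] at hn; omega) hm'
        obtain ⟨r', hr'⟩ := weakenR r.csize r (le_refl _) Δ'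
        exact ⟨r'.cB (add_comm Θ Δ'), by simp only [mu, mu_cB]; omega⟩
    | @impR B₁ D₁ Γ₀ Δ₀ p =>
      obtain ⟨r, hr⟩ := ih p (by simp [csize] at hn; omega) (msge_cons_self hm)
      refine ⟨impR r, ?_⟩
      simp only [mu]
      by_cases h : IProv (B₁ ::ₘ Γ) D₁
      · rw [if_pos h, if_pos (h.mono (msge_cons_self hm))]; omega
      · rw [if_neg h]; split <;> omega
    | @allL B₁ Γ₀ Δ t p =>
      obtain ⟨F, hF, hge, hmE⟩ := msge_cons_inv hm
      rcases ge_all_eq hge with rfl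
      obtain ⟨r, hr⟩ := ih p (by simp [csize] at hn; omega) (msge_cons_self hm)
      have e1 : (B₁.inst t) ::ₘ Γ₁
          = (B₁.inst t) ::ₘ (Fm.all B₁) ::ₘ Γ₁.erase (Fm.all B₁) := by
        rw [Multiset.cons_erase hF]
      have e2 : (Fm.all B₁) ::ₘ Γ₁.erase (Fm.all B₁) = Γ₁ := Multiset.cons_erase hF
      exact ⟨(allL t (r.cA e1)).cA e2, by simpa [mu] using hr⟩
    | @exR B₁ Γ₀ Δ₀ t p =>
      obtain ⟨r, hr⟩ := ih p (by simp [csize] at hn; omega) hm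
      exact ⟨exR t r, by simpa [mu] using hr⟩
    | @exL B₁ Γ₀ Δ c hc p =>
      obtain ⟨F, hF, hge, hmE⟩ := msge_cons_inv hm
      have hcB : ¬ (Fm.ex B₁).constIn c := hc.1 _ (Multiset.mem_cons_self _ _)
      have hcΓ : ∀ G ∈ Γ₀, ¬ G.constIn c := fun G hG => hc.1 G (Multiset.mem_cons_of_mem hG)
      rcases ge_ex_inv hge with rfl | ⟨c'', hge'⟩
      · set c' := msBnd Γ₁ + msBnd Δ with hc'def
        obtain ⟨q, hqs, hqm⟩ := rn_mu p (Function.update id c c')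
        have e1 : mrn (Function.update id c c') (B₁.inst (Tm.const c) ::ₘ Γ₀)
            = B₁.inst (Tm.const c') ::ₘ Γ₀ := by
          rw [mrn_cons, mrn_update_of_fresh hcΓ, rn_inst_const, Function.update_self,
            rn_update_of_fresh (show ¬ Fm.constIn c B₁ from hcB), Fm.rn_id, mrn_id]
        have e2 : mrn (Function.update id c c') Δ = Δ := by
          rw [mrn_update_of_fresh hc.2, mrn_id]
        obtain ⟨r, hr⟩ := ih ((q.cA e1).cB e2) (by simp [csize] at hn ⊢; omega)
          (msge_cons_self (Γ₁ := Γ₁.erase (Fm.ex B₁)) hmE)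
        have hfr : FreshSeq c' ((Fm.ex B₁) ::ₘ Γ₁.erase (Fm.ex B₁)) Δ := by
          rw [Multiset.cons_erase hF]
          exact freshSeq_of_le (by omega) (by omega)
        have e3 : (Fm.ex B₁) ::ₘ Γ₁.erase (Fm.ex B₁) = Γ₁ := Multiset.cons_erase hF
        refine ⟨(exL c' hfr r).cA e3, ?_⟩
        calc ((exL c' hfr r).cA e3).mu = r.mu := by simp [mu]
          _ ≤ ((q.cA e1).cB e2).mu := hr
          _ ≤ p.mu := by simpa using hqm
          _ = (exL c hc p).mu := rfl
      · obtain ⟨q, hqs, hqm⟩ := rn_mu p (Function.update id c c'')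
        have e1 : mrn (Function.update id c c'') (B₁.inst (Tm.const c) ::ₘ Γ₀)
            = B₁.inst (Tm.const c'') ::ₘ Γ₀ := by
          rw [mrn_cons, mrn_update_of_fresh hcΓ, rn_inst_const, Function.update_self,
            rn_update_of_fresh (show ¬ Fm.constIn c B₁ from hcB), Fm.rn_id, mrn_id]
        have e2 : mrn (Function.update id c c'') Δ = Δ := by
          rw [mrn_update_of_fresh hc.2, mrn_id]
        have hm' : MsGe Γ₁ (B₁.inst (Tm.const c'') ::ₘ Γ₀) := by
          rw [← Multiset.cons_erase hF]
          exact msge_cons hge' hmE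
        obtain ⟨r, hr⟩ := ih ((q.cA e1).cB e2) (by simp [csize] at hn ⊢; omega) hm'
        refine ⟨r, ?_⟩
        calc r.mu ≤ ((q.cA e1).cB e2).mu := hr
          _ ≤ p.mu := by simpa using hqm
          _ = (exL c hc p).mu := rfl
    | @allR B₁ Γ Δ₀ c hc p =>
      set c' := msBnd Γ₁ + msBnd ((Fm.all B₁) ::ₘ Δ₀) with hc'def
      have hcB : ¬ (Fm.all B₁).constIn c := hc.2 _ (Multiset.mem_cons_self _ _)
      have hcΔ : ∀ G ∈ Δ₀, ¬ G.constIn c := fun G hG => hc.2 G (Multiset.mem_cons_of_mem hG)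
      obtain ⟨q, hqs, hqm⟩ := rn_mu p (Function.update id c c')
      have e1 : mrn (Function.update id c c') Γ = Γ := by
        rw [mrn_update_of_fresh hc.1, mrn_id]
      have e2 : mrn (Function.update id c c') (B₁.inst (Tm.const c) ::ₘ Δ₀)
          = B₁.inst (Tm.const c') ::ₘ Δ₀ := by
        rw [mrn_cons, mrn_update_of_fresh hcΔ, rn_inst_const, Function.update_self,
          rn_update_of_fresh (show ¬ Fm.constIn c B₁ from hcB), Fm.rn_id, mrn_id]
      obtain ⟨r, hr⟩ := ih ((q.cA e1).cB e2) (by simp [csize] at hn ⊢; omega) hm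
      have hfr : FreshSeq c' Γ₁ ((Fm.all B₁) ::ₘ Δ₀) :=
        freshSeq_of_le (by omega) (by omega)
      refine ⟨allR c' hfr r, ?_⟩
      calc (allR c' hfr r).mu = r.mu := rfl
        _ ≤ ((q.cA e1).cB e2).mu := hr
        _ ≤ p.mu := by simpa using hqm
        _ = (allR c hc p).mu := rfl

end CProof

/-! ### The master lemma -/

namespace CProof

theorem master {B D : Fm} {S P : Multiset Fm}
    (h1 : ¬ IProv (B ::ₘ S) D) (h2 : ∃ F ∈ P, IProv (B ::ₘ S) F) :
    ∀ {Γ Δ : Multiset Fm} (p : CProof Γ Δ),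
      (∀ X ∈ Γ, DFm X) → (∀ X ∈ Δ, GFm X) →
      hasImpR Γ Δ p B S P D →
      ∃ q : CProof (B ::ₘ S) Δ, q.mu < p.mu := by
  intro Γ Δ p
  induction p with
  | ax h =>
    intro _ _ hocc
    exact absurd hocc not_false
  | @contrL B₁ Γ₀ Δ p ih =>
    intro hΓ hΔ hocc
    have hΓ' : ∀ X ∈ B₁ ::ₘ B₁ ::ₘ Γ₀, DFm X := by
      intro X hX
      rcases Multiset.mem_cons.1 hX with rfl | hX
      · exact hΓ X (Multiset.mem_cons_self _ _)
      · exact hΓ X hX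
    obtain ⟨q, hq⟩ := ih hΓ' hΔ hocc
    exact ⟨q, by simpa [mu] using hq⟩
  | @contrR B₁ Γ₀ Δ₀ p ih =>
    intro hΓ hΔ hocc
    have hΔ' : ∀ X ∈ B₁ ::ₘ B₁ ::ₘ Δ₀, GFm X := by
      intro X hX
      rcases Multiset.mem_cons.1 hX with rfl | hX
      · exact hΔ X (Multiset.mem_cons_self _ _)
      · exact hΔ X hX
    obtain ⟨q, hq⟩ := ih hΓ hΔ' hocc
    exact ⟨contrR q, by simpa [mu] using hq⟩
  | @botR D₁ Γ₀ Δ₀ p ih =>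
    intro hΓ hΔ hocc
    have hΔ' : ∀ X ∈ Fm.bot ::ₘ Δ₀, GFm X := by
      intro X hX
      rcases Multiset.mem_cons.1 hX with rfl | hX
      · exact GFm.bot
      · exact hΔ X (Multiset.mem_cons_of_mem hX)
    obtain ⟨q, hq⟩ := ih hΓ hΔ' hocc
    exact ⟨botR q, by simpa [mu] using hq⟩
  | @andL B₁ D₁ Γ₀ Δ p ih =>
    intro hΓ hΔ hocc
    have hc : DFm (B₁.conj D₁) := hΓ _ (Multiset.mem_cons_self _ _)
    have hB₁ : DFm B₁ := by cases hc with | conj ha hb => exact ha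
    have hD₁ : DFm D₁ := by cases hc with | conj ha hb => exact hb
    have hΓ' : ∀ X ∈ B₁ ::ₘ D₁ ::ₘ (B₁.conj D₁) ::ₘ Γ₀, DFm X := by
      intro X hX
      rcases Multiset.mem_cons.1 hX with rfl | hX
      · exact hB₁
      rcases Multiset.mem_cons.1 hX with rfl | hX
      · exact hD₁
      · exact hΓ X hX
    obtain ⟨q, hq⟩ := ih hΓ' hΔ hocc
    exact ⟨q, by simpa [mu] using hq⟩
  | @andR B₁ D₁ Γ₀ Δ₀ p q ihp ihq =>
    intro hΓ hΔ hocc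
    have hc : GFm (B₁.conj D₁) := hΔ _ (Multiset.mem_cons_self _ _)
    have hB₁ : GFm B₁ := by cases hc with | conj ha hb => exact ha
    have hD₁ : GFm D₁ := by cases hc with | conj ha hb => exact hb
    have hΔ₀ : ∀ X ∈ Δ₀, GFm X := fun X hX => hΔ X (Multiset.mem_cons_of_mem hX)
    have hΔ1 : ∀ X ∈ B₁ ::ₘ Δ₀, GFm X := by
      intro X hX
      rcases Multiset.mem_cons.1 hX with rfl | hX
      · exact hB₁
      · exact hΔ₀ X hX
    have hΔ2 : ∀ X ∈ D₁ ::ₘ Δ₀, GFm X := by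
      intro X hX
      rcases Multiset.mem_cons.1 hX with rfl | hX
      · exact hD₁
      · exact hΔ₀ X hX
    rcases hocc with hocc | hocc
    · obtain ⟨q₁, hq₁⟩ := ihp hΓ hΔ1 hocc
      have hSg : MsGe (B ::ₘ S) Γ₀ := msge_of_hasImpR p hocc
      obtain ⟨r₂, hr₂⟩ := strengthenC q.csize q (le_refl _) hSg
      exact ⟨andR q₁ r₂, by simp only [mu]; omega⟩
    · obtain ⟨q₂, hq₂⟩ := ihq hΓ hΔ2 hocc
      have hSg : MsGe (B ::ₘ S) Γ₀ := msge_of_hasImpR q hocc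
      obtain ⟨r₁, hr₁⟩ := strengthenC p.csize p (le_refl _) hSg
      exact ⟨andR r₁ q₂, by simp only [mu]; omega⟩
  | @orL B₁ D₁ Γ₀ Δ p q ihp ihq =>
    intro hΓ hΔ hocc
    have hc : DFm (B₁.disj D₁) := hΓ _ (Multiset.mem_cons_self _ _)
    have hB₁ : DFm B₁ := by cases hc with | disj ha hb => exact ha
    have hD₁ : DFm D₁ := by cases hc with | disj ha hb => exact hb
    have hΓ₀ : ∀ X ∈ Γ₀, DFm X := fun X hX => hΓ X (Multiset.mem_cons_of_mem hX)
    have hΓ1 : ∀ X ∈ B₁ ::ₘ Γ₀, DFm X := by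
      intro X hX
      rcases Multiset.mem_cons.1 hX with rfl | hX
      · exact hB₁
      · exact hΓ₀ X hX
    have hΓ2 : ∀ X ∈ D₁ ::ₘ Γ₀, DFm X := by
      intro X hX
      rcases Multiset.mem_cons.1 hX with rfl | hX
      · exact hD₁
      · exact hΓ₀ X hX
    rcases hocc with hocc | hocc
    · obtain ⟨q₁, hq₁⟩ := ihp hΓ1 hΔ hocc
      refine ⟨q₁, lt_of_lt_of_le hq₁ ?_⟩
      simp only [mu]; omega
    · obtain ⟨q₂, hq₂⟩ := ihq hΓ2 hΔ hocc
      refine ⟨q₂, lt_of_lt_of_le hq₂ ?_⟩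
      simp only [mu]; omega
  | @orR1 B₁ D₁ Γ₀ Δ₀ p ih =>
    intro hΓ hΔ hocc
    have hc : GFm (B₁.disj D₁) := hΔ _ (Multiset.mem_cons_self _ _)
    have hB₁ : GFm B₁ := by cases hc with | disj ha hb => exact ha
    have hΔ' : ∀ X ∈ B₁ ::ₘ Δ₀, GFm X := by
      intro X hX
      rcases Multiset.mem_cons.1 hX with rfl | hX
      · exact hB₁
      · exact hΔ X (Multiset.mem_cons_of_mem hX)
    obtain ⟨q, hq⟩ := ih hΓ hΔ' hocc
    exact ⟨orR1 q, by simpa [mu] using hq⟩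
  | @orR2 B₁ D₁ Γ₀ Δ₀ p ih =>
    intro hΓ hΔ hocc
    have hc : GFm (B₁.disj D₁) := hΔ _ (Multiset.mem_cons_self _ _)
    have hD₁ : GFm D₁ := by cases hc with | disj ha hb => exact hb
    have hΔ' : ∀ X ∈ D₁ ::ₘ Δ₀, GFm X := by
      intro X hX
      rcases Multiset.mem_cons.1 hX with rfl | hX
      · exact hD₁
      · exact hΔ X (Multiset.mem_cons_of_mem hX)
    obtain ⟨q, hq⟩ := ih hΓ hΔ' hocc
    exact ⟨orR2 q, by simpa [mu] using hq⟩
  | @impL B₁ D₁ Γ₀ Δ' Θ p q ihp ihq =>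
    intro hΓ hΔ hocc
    have hc : DFm (B₁.imp D₁) := hΓ _ (Multiset.mem_cons_self _ _)
    have hB₁ : GFm B₁ := by cases hc with | imp ha hb => exact ha
    have hD₁ : DFm D₁ := by cases hc with | imp ha hb => exact hb
    have hΓ₀ : ∀ X ∈ Γ₀, DFm X := fun X hX => hΓ X (Multiset.mem_cons_of_mem hX)
    rcases hocc with hocc | hocc
    · -- occurrence in the left premise
      have hΔ1 : ∀ X ∈ B₁ ::ₘ Δ', GFm X := by
        intro X hX
        rcases Multiset.mem_cons.1 hX with rfl | hX
        · exact hB₁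
        · exact hΔ X (Multiset.mem_add.2 (Or.inl hX))
      obtain ⟨q₁, hq₁⟩ := ihp hΓ hΔ1 hocc
      have hSg : MsGe (B ::ₘ S) ((B₁.imp D₁) ::ₘ Γ₀) := msge_of_hasImpR p hocc
      obtain ⟨F, hF, hge, hmE⟩ := msge_cons_inv hSg
      rcases ge_imp_inv hge with rfl | hge'
      · have e : (B₁.imp D₁) ::ₘ (B ::ₘ S).erase (B₁.imp D₁) = B ::ₘ S :=
          Multiset.cons_erase hF
        obtain ⟨r₂, hr₂⟩ := strengthenC q.csize q (le_refl _) (msge_cons_self hmE)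
        exact ⟨(impL (q₁.cA e.symm) r₂).cA e, by simp only [mu, mu_cA]; omega⟩
      · have hm' : MsGe (B ::ₘ S) (D₁ ::ₘ Γ₀) := by
          rw [← Multiset.cons_erase hF]
          exact msge_cons hge' hmE
        obtain ⟨r, hr⟩ := strengthenC q.csize q (le_refl _) hm'
        obtain ⟨r', hr'⟩ := weakenR r.csize r (le_refl _) Δ'
        have hp1 : 1 ≤ p.mu := one_le_mu p hocc h1
        exact ⟨r'.cB (add_comm Θ Δ'), by simp only [mu, mu_cB]; omega⟩
    · -- occurrence in the right premise
      have hΓ2 : ∀ X ∈ D₁ ::ₘ Γ₀, DFm X := by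
        intro X hX
        rcases Multiset.mem_cons.1 hX with rfl | hX
        · exact hD₁
        · exact hΓ₀ X hX
      have hΘ : ∀ X ∈ Θ, GFm X := fun X hX => hΔ X (Multiset.mem_add.2 (Or.inr hX))
      obtain ⟨q₂, hq₂⟩ := ihq hΓ2 hΘ hocc
      obtain ⟨r, hr⟩ := weakenR q₂.csize q₂ (le_refl _) Δ'
      exact ⟨r.cB (add_comm Θ Δ'), by simp only [mu, mu_cB]; omega⟩
  | @impR B₁ D₁ Γ₀ Δ₀ p ih =>
    intro hΓ hΔ hocc
    have hc : GFm (B₁.imp D₁) := hΔ _ (Multiset.mem_cons_self _ _)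
    have hB₁ : DFm B₁ := by cases hc with | imp ha hb => exact ha
    have hD₁ : GFm D₁ := by cases hc with | imp ha hb => exact hb
    rcases hocc with ⟨rfl, rfl, rfl, rfl⟩ | hocc
    · -- this is the designated occurrence
      obtain ⟨F, hF, hIF⟩ := h2
      obtain ⟨w, hw⟩ := hIF
      have hw0 : w.mu = 0 := mu_of_isI w hw
      obtain ⟨r, hr⟩ := weakenR w.csize w (le_refl _) ((B₁.imp D₁) ::ₘ Δ₀.erase F)
      have e : ({F} : Multiset Fm) + ((B₁.imp D₁) ::ₘ Δ₀.erase F) = (B₁.imp D₁) ::ₘ Δ₀ := by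
        rw [Multiset.singleton_add, Multiset.cons_swap, Multiset.cons_erase hF]
      refine ⟨r.cB e, ?_⟩
      simp only [mu, mu_cB, if_neg h1]
      omega
    · have hΓ' : ∀ X ∈ B₁ ::ₘ Γ₀, DFm X := by
        intro X hX
        rcases Multiset.mem_cons.1 hX with rfl | hX
        · exact hB₁
        · exact hΓ X hX
      have hΔ' : ∀ X ∈ D₁ ::ₘ Δ₀, GFm X := by
        intro X hX
        rcases Multiset.mem_cons.1 hX with rfl | hX
        · exact hD₁
        · exact hΔ X (Multiset.mem_cons_of_mem hX)
      obtain ⟨q', hq'⟩ := ih hΓ' hΔ' hocc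
      have hSg : MsGe (B ::ₘ S) (B₁ ::ₘ Γ₀) := msge_of_hasImpR p hocc
      have hSgΓ : MsGe (B ::ₘ S) Γ₀ := msge_drop hSg
      obtain ⟨r, hr⟩ := strengthenC q'.csize q' (le_refl _)
        (msge_weaken (A := B₁) (msge_refl (B ::ₘ S)))
      refine ⟨impR r, ?_⟩
      simp only [mu]
      by_cases hold : IProv (B₁ ::ₘ Γ₀) D₁
      · rw [if_pos hold, if_pos (hold.mono (msge_cons_self hSgΓ))]
        omega
      · rw [if_neg hold]
        split <;> omega
  | @allL B₁ Γ₀ Δ t p ih =>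
    intro hΓ hΔ hocc
    have hc : DFm (Fm.all B₁) := hΓ _ (Multiset.mem_cons_self _ _)
    have hB₁ : DFm B₁ := by cases hc with | all ha => exact ha
    have hΓ' : ∀ X ∈ (B₁.inst t) ::ₘ (Fm.all B₁) ::ₘ Γ₀, DFm X := by
      intro X hX
      rcases Multiset.mem_cons.1 hX with rfl | hX
      · exact (dg_subst B₁ 0 t).1 hB₁
      · exact hΓ X hX
    obtain ⟨q, hq⟩ := ih hΓ' hΔ hocc
    exact ⟨q, by simpa [mu] using hq⟩
  | @exR B₁ Γ₀ Δ₀ t p ih =>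
    intro hΓ hΔ hocc
    have hc : GFm (Fm.ex B₁) := hΔ _ (Multiset.mem_cons_self _ _)
    have hB₁ : GFm B₁ := by cases hc with | ex ha => exact ha
    have hΔ' : ∀ X ∈ (B₁.inst t) ::ₘ Δ₀, GFm X := by
      intro X hX
      rcases Multiset.mem_cons.1 hX with rfl | hX
      · exact (dg_subst B₁ 0 t).2 hB₁
      · exact hΔ X (Multiset.mem_cons_of_mem hX)
    obtain ⟨q, hq⟩ := ih hΓ hΔ' hocc
    exact ⟨exR t q, by simpa [mu] using hq⟩
  | @exL B₁ Γ₀ Δ c hc p ih =>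
    intro hΓ hΔ hocc
    have hcD : DFm (Fm.ex B₁) := hΓ _ (Multiset.mem_cons_self _ _)
    have hB₁ : DFm B₁ := by cases hcD with | ex ha => exact ha
    have hΓ' : ∀ X ∈ (B₁.inst (Tm.const c)) ::ₘ Γ₀, DFm X := by
      intro X hX
      rcases Multiset.mem_cons.1 hX with rfl | hX
      · exact (dg_subst B₁ 0 (Tm.const c)).1 hB₁
      · exact hΓ X (Multiset.mem_cons_of_mem hX)
    obtain ⟨q, hq⟩ := ih hΓ' hΔ hocc
    exact ⟨q, by simpa [mu] using hq⟩
  | @allR B₁ Γ₀ Δ₀ c hc p ih =>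
    intro hΓ hΔ hocc
    exact absurd (hΔ _ (Multiset.mem_cons_self _ _)) (by intro h; cases h)

end CProof
/-- Lemma `impr`: let `Γ` and `Δ` be multisets of D- and
G-formulas respectively, and let `Γ → Δ` have a C-proof `Ξ` containing an
⊃-R rule with upper sequent `B,Σ → Π,D` and lower sequent `Σ → Π,B⊃D` such
that `B,Σ → D` has no I-proof but `B,Σ → F` has an I-proof for some `F ∈ Π`.
Then `B,Σ → Δ` has a C-proof of nonconstructiveness measure smaller than
`μ(Ξ)`. -/
theorem statement_5 (Γ Δ : Multiset Fm) (hΓ : ∀ X ∈ Γ, DFm X) (hΔ : ∀ X ∈ Δ, GFm X)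
    (p : CProof Γ Δ) (B D : Fm) (S P : Multiset Fm)
    (hocc : CProof.hasImpR _ _ p B S P D)
    (h1 : ¬ IProv (B ::ₘ S) D)
    (h2 : ∃ F ∈ P, IProv (B ::ₘ S) F) :
    ∃ q : CProof (B ::ₘ S) Δ, q.mu < p.mu := by
  exact CProof.master h1 h2 p hΓ hΔ hocc
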